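/- arXiv:1303.0262 — 6 statements merged into one kernel-verified Lean document; each statement's English description precedes it below -/
import Mathlib

section
/- There exists a constant C > 0 such that for every integer n ≥ 2 and every set S of n points in ℝ², S admits a covering path with m segments satisfying m ≤ n/2 + C·n/log n. -/
/-!
After a shear making all `x`-coordinates distinct, any `4 ^ k` points contain a `k`-point cup
or cap (Erdős–Szekeres). The lines through consecutive pairs of points of a cup meet between
the pairs, so the path through these intersection points covers the `k` points with about
`k / 2` segments. Peeling off cups and caps while at least `4 ^ k` points remain and visiting
the rest one by one costs `n / 2 + 2 n / k + 4 ^ k` segments, and `k ≈ (log₂ n) / 4` makes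
the error `O(n / log n)`.
-/

noncomputable section

open scoped RealInnerProductSpace

/-- Points of the Euclidean plane. -/
abbrev Pt : Type := EuclideanSpace ℝ (Fin 2)

/-- The `i`-th closed segment of a polygonal path with vertices `v 0, …, v m`. -/
def pathSeg {m : ℕ} (v : Fin (m + 1) → Pt) (i : Fin m) : Set Pt :=
  segment ℝ (v i.castSucc) (v i.succ)

/-- `v 0, …, v m` is a covering path with `m` segments for `S`:
every point of `S` lies on some segment of the path. -/
def IsCoveringPath (S : Set Pt) (m : ℕ) (v : Fin (m + 1) → Pt) : Prop :=
  ∀ p ∈ S, ∃ i : Fin m, p ∈ pathSeg v i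

/-- The polygonal path with vertices `v 0, …, v m` is noncrossing (a simple arc):
consecutive segments meet exactly in their common vertex, and
non-consecutive segments are disjoint. -/
def IsNoncrossing (m : ℕ) (v : Fin (m + 1) → Pt) : Prop :=
  ∀ i j : Fin m, i < j →
    (((j : ℕ) = (i : ℕ) + 1) → pathSeg v i ∩ pathSeg v j = {v i.succ}) ∧
    (((i : ℕ) + 1 < (j : ℕ)) → pathSeg v i ∩ pathSeg v j = ∅)

section Polyline

variable {E F : Type*} [AddCommGroup E] [Module ℝ E] [AddCommGroup F] [Module ℝ F]

def polyline : List E → Set E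
  | a :: b :: t => segment ℝ a b ∪ polyline (b :: t)
  | _ => ∅

@[simp] theorem polyline_nil : polyline ([] : List E) = ∅ := rfl

@[simp] theorem polyline_singleton (a : E) : polyline [a] = ∅ := rfl

theorem polyline_cons_cons (a b : E) (t : List E) :
    polyline (a :: b :: t) = segment ℝ a b ∪ polyline (b :: t) := rfl

theorem polyline_subset_cons (z : E) : ∀ l : List E, polyline l ⊆ polyline (z :: l)
  | [] => by simp
  | _ :: _ => Set.subset_union_right

theorem mem_polyline_cons {p : E} : ∀ (z : E) {l : List E}, p ∈ l → p ∈ polyline (z :: l)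
  | z, b :: t, hp => by
    rcases List.mem_cons.1 hp with rfl | hp
    · exact Or.inl (right_mem_segment ℝ z p)
    · exact Or.inr (mem_polyline_cons b hp)

theorem polyline_union_subset_append :
    ∀ l r : List E, polyline l ∪ polyline r ⊆ polyline (l ++ r)
  | [], _ => by simp
  | [a], r => by simpa using polyline_subset_cons a r
  | a :: b :: t, r => by
    rw [polyline_cons_cons, Set.union_assoc]
    exact Set.union_subset_union_right _ (polyline_union_subset_append (b :: t) r)

theorem image_polyline (f : E →ᵃ[ℝ] F) : ∀ l : List E, f '' polyline l = polyline (l.map f)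
  | [] => Set.image_empty _
  | [_] => Set.image_empty _
  | a :: b :: t => by
    rw [polyline_cons_cons, Set.image_union, image_segment, image_polyline f (b :: t)]
    rfl

theorem mem_polyline_map (f : E →ᵃ[ℝ] F) {p : E} {l : List E} (hp : p ∈ polyline l) :
    f p ∈ polyline (l.map f) :=
  image_polyline f l ▸ Set.mem_image_of_mem f hp

theorem exists_segment_of_mem_polyline {p : E} :
    ∀ {l : List E}, p ∈ polyline l → ∃ i, ∃ h : i + 1 < l.length, p ∈ segment ℝ l[i] l[i + 1]
  | a :: b :: t, hp => by
    rcases hp with hp | hp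
    · exact ⟨0, by simp, hp⟩
    · obtain ⟨i, hi, hp⟩ := exists_segment_of_mem_polyline hp
      exact ⟨i + 1, by simpa using hi, hp⟩

end Polyline

theorem exists_isCoveringPath_of_subset_polyline {S : Set Pt} (hS : S.Nonempty) {l : List Pt}
    (h : S ⊆ polyline l) :
    ∃ (m : ℕ) (v : Fin (m + 1) → Pt), IsCoveringPath S m v ∧ m + 1 = l.length := by
  obtain ⟨p, hp⟩ := hS
  have hl : 0 < l.length := List.length_pos_iff.2 (by rintro rfl; exact h hp)
  refine ⟨l.length - 1, fun j => l[(j : ℕ)]'(by omega), fun q hq => ?_, by omega⟩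
  obtain ⟨i, hi, hq⟩ := exists_segment_of_mem_polyline (h hq)
  exact ⟨⟨i, by omega⟩, hq⟩

theorem Pt.ext {p q : Pt} (h0 : p 0 = q 0) (h1 : p 1 = q 1) : p = q := by
  ext i
  fin_cases i <;> assumption

/-- Junk value `0` when `p 0 = q 0`. -/
def lineSlope (p q : Pt) : ℝ := (q 1 - p 1) / (q 0 - p 0)

theorem lineSlope_comm (p q : Pt) : lineSlope p q = lineSlope q p := by
  unfold lineSlope
  rw [← neg_sub, ← neg_sub (p 0), neg_div_neg_eq]

@[simp] theorem lineSlope_neg (p q : Pt) : lineSlope (-p) (-q) = lineSlope p q := by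
  simp only [lineSlope, PiLp.neg_apply, neg_sub_neg]
  exact lineSlope_comm q p

/-- Meaningful only when `a 0 ≠ b 0`: the line through `a` and `b` is then nonvertical. -/
def OnLine (a b z : Pt) : Prop := z 1 = a 1 + lineSlope a b * (z 0 - a 0)

theorem onLine_left (a b : Pt) : OnLine a b a := by simp [OnLine]

theorem lineSlope_mul_sub {p q : Pt} (h : p 0 ≠ q 0) :
    lineSlope p q * (q 0 - p 0) = q 1 - p 1 :=
  div_mul_cancel₀ _ (sub_ne_zero.2 h.symm)

theorem onLine_right {a b : Pt} (h : a 0 ≠ b 0) : OnLine a b b := by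
  rw [OnLine, lineSlope_mul_sub h]
  ring

theorem OnLine.eq_lineMap {a b z : Pt} (hz : OnLine a b z) :
    z = AffineMap.lineMap a (a + !₂[1, lineSlope a b]) (z 0 - a 0) := by
  unfold OnLine at hz
  apply Pt.ext <;> simp [AffineMap.lineMap_apply]
  linear_combination hz

/-- A nonvertical line is an affine image of `ℝ`, so its segments are images of intervals. -/
theorem mem_segment_of_onLine {a b z p w : Pt} (hz : OnLine a b z) (hp : OnLine a b p)
    (hw : OnLine a b w) (hzp : z 0 ≤ p 0) (hpw : p 0 ≤ w 0) : p ∈ segment ℝ z w := by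
  rw [hz.eq_lineMap, hp.eq_lineMap, hw.eq_lineMap, ← image_segment]
  refine Set.mem_image_of_mem _ ?_
  rw [segment_eq_Icc (by linarith)]
  constructor <;> linarith

theorem exists_onLine_onLine {a b c d : Pt} (hab : a 0 < b 0) (hbc : b 0 < c 0)
    (habc : lineSlope a b ≤ lineSlope b c) (hbcd : lineSlope b c ≤ lineSlope c d) :
    ∃ w : Pt, OnLine a b w ∧ OnLine c d w ∧ b 0 ≤ w 0 ∧ w 0 ≤ c 0 := by
  have e1 := lineSlope_mul_sub hab.ne
  have e2 := lineSlope_mul_sub hbc.ne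
  set s₁ := lineSlope a b
  set s₂ := lineSlope b c
  set s₃ := lineSlope c d
  rcases (habc.trans hbcd).eq_or_lt with hs | hs
  · -- all three slopes agree, so `b` is on both lines
    have : s₂ = s₃ := le_antisymm hbcd (hs ▸ habc)
    refine ⟨b, ?_, ?_, le_rfl, hbc.le⟩
    · show b 1 = a 1 + s₁ * (b 0 - a 0)
      linarith
    · show b 1 = c 1 + s₃ * (b 0 - c 0)
      rw [← this]
      linarith
  · set ξ := (c 1 - s₃ * c 0 - a 1 + s₁ * a 0) / (s₁ - s₃)
    have hξ : ξ * (s₁ - s₃) = c 1 - s₃ * c 0 - a 1 + s₁ * a 0 :=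
      div_mul_cancel₀ _ (by linarith)
    set w : Pt := !₂[ξ, a 1 + s₁ * (ξ - a 0)]
    have hw0 : w 0 = ξ := rfl
    have hw1 : w 1 = a 1 + s₁ * (ξ - a 0) := rfl
    refine ⟨w, by rw [OnLine, hw0, hw1], ?_, ?_, ?_⟩
    · show w 1 = c 1 + s₃ * (w 0 - c 0)
      rw [hw0, hw1]
      linear_combination hξ
    · rw [hw0]
      nlinarith
    · rw [hw0]
      nlinarith

def IsCup : List Pt → Prop
  | a :: b :: c :: t => a 0 < b 0 ∧ lineSlope a b ≤ lineSlope b c ∧ IsCup (b :: c :: t)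
  | [a, b] => a 0 < b 0
  | _ => True

/-- Caps are listed from right to left, so that a cap and a cup can share their first point. -/
def IsCap (l : List Pt) : Prop := IsCup (l.map (-·))

theorem IsCup.lt {a b : Pt} : ∀ {t : List Pt}, IsCup (a :: b :: t) → a 0 < b 0
  | [], h => h
  | _ :: _, h => h.1

theorem IsCup.isChain : ∀ {c : List Pt}, IsCup c → c.IsChain (fun p q => p 0 < q 0)
  | [], _ => .nil
  | [_], _ => .singleton _
  | [_, _], h => .cons_cons h (.singleton _)
  | _ :: _ :: _ :: _, h => .cons_cons h.1 h.2.2.isChain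

theorem IsCup.nodup {c : List Pt} (h : IsCup c) : c.Nodup :=
  (List.isChain_iff_pairwise.1 ((List.isChain_map (· 0)).2 h.isChain)).nodup.of_map _

theorem IsCap.nodup {c : List Pt} (h : IsCap c) : c.Nodup :=
  (IsCup.nodup h).of_map _

theorem isCap_cons_cons_cons {a b c : Pt} {t : List Pt} :
    IsCap (a :: b :: c :: t) ↔ b 0 < a 0 ∧ lineSlope a b ≤ lineSlope b c ∧ IsCap (b :: c :: t) := by
  simp [IsCap, IsCup]

theorem IsCap.lt {a b : Pt} {t : List Pt} (h : IsCap (a :: b :: t)) : b 0 < a 0 := by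
  simpa using IsCup.lt h

theorem mem_polyline_of_onLine {a b z : Pt} {t : List Pt} (hab : a 0 < b 0)
    (hz : OnLine a b z) (hza : z 0 ≤ a 0) : ∀ p ∈ a :: b :: t, p ∈ polyline (z :: b :: t) := by
  rintro p (_ | ⟨_, hp⟩)
  · exact Or.inl (mem_segment_of_onLine hz (onLine_left a b) (onLine_right hab.ne) hza hab.le)
  · exact mem_polyline_cons z hp

/-- The lines through the pairs `(a, b), (c, d), …` of a cup meet consecutively between
the pairs, so the path through these intersection points covers the cup. The first vertex `z`
is left free so that the recursion can start from the previous intersection point. -/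
theorem IsCup.exists_polyline_cover_of_onLine : ∀ {t : List Pt} {a b : Pt}, IsCup (a :: b :: t) →
    ∃ ws : List Pt, ws.length ≤ t.length / 2 + 2 ∧
      ∀ z, OnLine a b z → z 0 ≤ a 0 → ∀ p ∈ a :: b :: t, p ∈ polyline (z :: ws)
  | [], _, _, h => ⟨_, by simp, fun _ hz hza => mem_polyline_of_onLine h hz hza⟩
  | [_], _, _, h => ⟨_, by simp, fun _ hz hza => mem_polyline_of_onLine h.1 hz hza⟩
  | c :: d :: t, a, b, h => by
    obtain ⟨hab, habc, hbc, hbcd, hcd⟩ := h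
    obtain ⟨w, hwab, hwcd, hbw, hwc⟩ := exists_onLine_onLine hab hbc habc hbcd
    obtain ⟨ws, hws, hcover⟩ := IsCup.exists_polyline_cover_of_onLine hcd
    refine ⟨w :: ws, by simp only [List.length_cons] at hws ⊢; omega, fun z hz hza => ?_⟩
    rintro p (_ | ⟨_, _ | ⟨_, hp⟩⟩)
    · exact Or.inl (mem_segment_of_onLine hz (onLine_left a b) hwab hza (hab.le.trans hbw))
    · exact Or.inl (mem_segment_of_onLine hz (onLine_right hab.ne) hwab (hza.trans hab.le) hbw)
    · exact polyline_subset_cons z _ (hcover w hwcd hwc p hp)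

theorem IsCup.exists_polyline_cover {c : List Pt} (h : IsCup c) :
    ∃ l : List Pt, l.length ≤ c.length / 2 + 2 ∧ ∀ p ∈ c, p ∈ polyline l := by
  match c, h with
  | [], _ => exact ⟨[], by simp, by simp⟩
  | [a], _ => exact ⟨[a, a], by simp, by simp [polyline_cons_cons]⟩
  | a :: b :: t, h =>
    obtain ⟨ws, hws, hcover⟩ := h.exists_polyline_cover_of_onLine
    refine ⟨a :: ws, ?_, hcover a (onLine_left a b) le_rfl⟩
    simp only [List.length_cons] at hws ⊢
    omega

theorem IsCap.exists_polyline_cover {c : List Pt} (h : IsCap c) :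
    ∃ l : List Pt, l.length ≤ c.length / 2 + 2 ∧ ∀ p ∈ c, p ∈ polyline l := by
  obtain ⟨l, hl, hcover⟩ := IsCup.exists_polyline_cover h
  let neg : Pt →ᵃ[ℝ] Pt := (-LinearMap.id).toAffineMap
  refine ⟨l.map neg, by simpa using hl, fun p hp => ?_⟩
  simpa [neg] using mem_polyline_map neg (hcover (-p) (List.mem_map_of_mem hp))

def HasCup (X : Finset Pt) (k : ℕ) : Prop := ∃ c : List Pt, IsCup c ∧ c.length = k ∧ ∀ p ∈ c, p ∈ X

def HasCap (X : Finset Pt) (k : ℕ) : Prop := ∃ c : List Pt, IsCap c ∧ c.length = k ∧ ∀ p ∈ c, p ∈ X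

theorem HasCup.mono {X Y : Finset Pt} {k : ℕ} (h : HasCup X k) (hXY : X ⊆ Y) : HasCup Y k :=
  let ⟨c, hc, hck, hcX⟩ := h
  ⟨c, hc, hck, fun p hp => hXY (hcX p hp)⟩

theorem HasCap.mono {X Y : Finset Pt} {k : ℕ} (h : HasCap X k) (hXY : X ⊆ Y) : HasCap Y k :=
  let ⟨c, hc, hck, hcX⟩ := h
  ⟨c, hc, hck, fun p hp => hXY (hcX p hp)⟩

theorem hasCup_two_and_hasCap_two {X : Finset Pt} (hX : Set.InjOn (· 0) (X : Set Pt))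
    (hcard : 2 ≤ X.card) : HasCup X 2 ∧ HasCap X 2 := by
  obtain ⟨p, hp, q, hq, hpq⟩ := Finset.one_lt_card.1 hcard
  wlog h : p 0 < q 0 generalizing p q
  · exact this q hq p hp hpq.symm <| (lt_or_gt_of_ne fun h' => hpq (hX hp hq h')).resolve_left h
  refine ⟨⟨[p, q], h, rfl, ?_⟩, ⟨[q, p], by simpa [IsCap, IsCup] using h, rfl, ?_⟩⟩ <;>
    simp [hp, hq]

/-- Either the cup extends by the second point of the cap or the cap by the second point of the
cup, depending on how the slopes at `r` compare. -/
theorem hasCup_or_hasCap_of_isCap_of_isCup {X : Finset Pt} {r : Pt} {cs us : List Pt}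
    (hcap : IsCap (r :: cs)) (hcs : cs ≠ []) (hcX : ∀ p ∈ r :: cs, p ∈ X)
    (hcup : IsCup (r :: us)) (hus : us ≠ []) (huX : ∀ p ∈ r :: us, p ∈ X) :
    HasCup X (us.length + 2) ∨ HasCap X (cs.length + 2) := by
  obtain ⟨c, cs, rfl⟩ := List.exists_cons_of_ne_nil hcs
  obtain ⟨u, us, rfl⟩ := List.exists_cons_of_ne_nil hus
  rcases le_or_gt (lineSlope c r) (lineSlope r u) with h | h
  · refine .inl ⟨c :: r :: u :: us, ⟨hcap.lt, h, hcup⟩, by simp, ?_⟩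
    rintro x (_ | ⟨_, hx⟩)
    exacts [hcX _ (by simp), huX x hx]
  · refine .inr ⟨u :: r :: c :: cs, isCap_cons_cons_cons.2 ⟨hcup.lt, ?_, hcap⟩, by simp, ?_⟩
    · rw [lineSlope_comm u r, lineSlope_comm r c]
      exact h.le
    · rintro x (_ | ⟨_, hx⟩)
      exacts [huX _ (by simp), hcX x hx]

/-- The Erdős–Szekeres theorem for cups and caps, with the weak bound `2 ^ (k + l)`. -/
theorem hasCup_or_hasCap {X : Finset Pt} (hX : Set.InjOn (· 0) (X : Set Pt)) {k l : ℕ}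
    (hk : 2 ≤ k) (hl : 2 ≤ l) (hcard : 2 ^ (k + l) ≤ X.card) : HasCup X k ∨ HasCap X l := by
  classical
  have htwo : 2 ≤ X.card := le_trans (Nat.le_self_pow (by omega) 2) hcard
  obtain rfl | hk := hk.eq_or_lt
  · exact .inl (hasCup_two_and_hasCap_two hX htwo).1
  obtain rfl | hl := hl.eq_or_lt
  · exact .inr (hasCup_two_and_hasCap_two hX htwo).2
  -- `Y` consists of the left endpoints of `(k - 1)`-cups
  let Y := X.filter fun p => ∃ t, IsCup (p :: t) ∧ t.length = k - 2 ∧ ∀ q ∈ p :: t, q ∈ X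
  have hYX : Y ⊆ X := Finset.filter_subset _ _
  by_cases hrest : 2 ^ (k - 1 + l) ≤ (X \ Y).card
  · rcases hasCup_or_hasCap (hX.mono (by simp)) (by omega) (by omega) hrest with
      ⟨c, hc, hck, hcXY⟩ | hcap
    · obtain ⟨p, t, rfl⟩ := List.exists_cons_of_length_pos (by omega : 0 < c.length)
      have hpY : p ∈ Y := Finset.mem_filter.2 ⟨(Finset.mem_sdiff.1 (hcXY p (by simp))).1, t, hc,
        by simp at hck; omega, fun q hq => (Finset.mem_sdiff.1 (hcXY q hq)).1⟩
      exact absurd hpY (Finset.mem_sdiff.1 (hcXY p (by simp))).2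
    · exact .inr (hcap.mono Finset.sdiff_subset)
  · have hY : 2 ^ (k + (l - 1)) ≤ Y.card := by
      have := Finset.card_sdiff_add_card_eq_card hYX
      rw [show k + l = k - 1 + l + 1 by omega, pow_succ] at hcard
      rw [show k + (l - 1) = k - 1 + l by omega]
      omega
    rcases hasCup_or_hasCap (hX.mono hYX) (by omega) (by omega) hY with hcup | ⟨c, hc, hcl, hcY⟩
    · exact .inl (hcup.mono hYX)
    obtain ⟨r, cs, rfl⟩ := List.exists_cons_of_length_pos (by omega : 0 < c.length)
    obtain ⟨-, us, hrus, husk, husX⟩ := Finset.mem_filter.1 (hcY r (by simp))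
    have := hasCup_or_hasCap_of_isCap_of_isCup hc (List.ne_nil_of_length_pos (by simp at hcl; omega))
      (fun p hp => hYX (hcY p hp)) hrus (List.ne_nil_of_length_pos (by omega)) husX
    rwa [husk, show k - 2 + 2 = k by omega, show cs.length + 2 = l by simp at hcl; omega] at this
termination_by k + l

theorem exists_subset_card_eq_polyline_cover {R : Finset Pt} (hR : Set.InjOn (· 0) (R : Set Pt))
    {k : ℕ} (hk : 2 ≤ k) (hcard : 4 ^ k ≤ R.card) :
    ∃ C ⊆ R, C.card = k ∧ ∃ l : List Pt, l.length ≤ k / 2 + 2 ∧ ∀ p ∈ C, p ∈ polyline l := by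
  have h4 : 2 ^ (k + k) = 4 ^ k := by rw [← two_mul, pow_mul]; norm_num
  obtain ⟨c, hnd, rfl, hcR, l, hl, hcover⟩ : ∃ c : List Pt, c.Nodup ∧ c.length = k ∧
      (∀ p ∈ c, p ∈ R) ∧ ∃ l : List Pt, l.length ≤ c.length / 2 + 2 ∧ ∀ p ∈ c, p ∈ polyline l := by
    rcases hasCup_or_hasCap hR hk hk (h4 ▸ hcard) with ⟨c, hc, hck, hcR⟩ | ⟨c, hc, hck, hcR⟩
    exacts [⟨c, hc.nodup, hck, hcR, hc.exists_polyline_cover⟩,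
      ⟨c, hc.nodup, hck, hcR, hc.exists_polyline_cover⟩]
  refine ⟨c.toFinset, fun p hp => hcR p (List.mem_toFinset.1 hp),
    List.toFinset_card_of_nodup hnd, l, hl, fun p hp => hcover p (List.mem_toFinset.1 hp)⟩

theorem exists_polyline_cover_of_injOn {k : ℕ} (hk : 2 ≤ k) (R : Finset Pt)
    (hR : Set.InjOn (· 0) (R : Set Pt)) : ∃ l : List Pt, (∀ p ∈ R, p ∈ polyline l) ∧
      (l.length : ℝ) ≤ R.card / 2 + 2 * R.card / k + 4 ^ k := by
  induction R using Finset.strongInduction with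
  | H R ih =>
  by_cases hcard : 4 ^ k ≤ R.card
  · obtain ⟨C, hCR, hCk, l₁, hl₁, hcover₁⟩ := exists_subset_card_eq_polyline_cover hR hk hcard
    obtain ⟨l₂, hcover₂, hl₂⟩ :=
      ih (R \ C) (Finset.sdiff_ssubset hCR (Finset.card_pos.1 (by omega))) (hR.mono (by simp))
    refine ⟨l₁ ++ l₂, fun p hp => polyline_union_subset_append l₁ l₂ ?_, ?_⟩
    · by_cases hpC : p ∈ C
      exacts [.inl (hcover₁ p hpC), .inr (hcover₂ p (Finset.mem_sdiff.2 ⟨hp, hpC⟩))]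
    · have hRC : ((R \ C).card : ℝ) = R.card - k := by
        rw [Finset.card_sdiff_of_subset hCR, Nat.cast_sub (Finset.card_le_card hCR), hCk]
      have hl₁' : (l₁.length : ℝ) ≤ k / 2 + 2 :=
        calc (l₁.length : ℝ) ≤ ((k / 2 : ℕ) : ℝ) + 2 := by exact_mod_cast hl₁
          _ ≤ k / 2 + 2 := by gcongr; exact Nat.cast_div_le
      have : 2 * ((R.card : ℝ) - k) / k = 2 * R.card / k - 2 := by field_simp
      rw [hRC, this] at hl₂
      rw [List.length_append, Nat.cast_add]
      linarith
  · refine ⟨0 :: R.toList, fun p hp => mem_polyline_cons 0 (Finset.mem_toList.2 hp), ?_⟩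
    have : (R.card : ℝ) + 1 ≤ 4 ^ k := by exact_mod_cast (by omega : R.card + 1 ≤ 4 ^ k)
    have : (0 : ℝ) ≤ 2 * R.card / k := by positivity
    simp only [List.length_cons, Finset.length_toList, Nat.cast_add, Nat.cast_one]
    linarith

/-- A shear `(x, y) ↦ (x + t y, y)` separates the `x`-coordinates as soon as `t` avoids
the finitely many slopes `(q 0 - p 0) / (p 1 - q 1)`. -/
theorem exists_linearEquiv_injOn (S : Finset Pt) :
    ∃ e : Pt ≃ₗ[ℝ] Pt, Set.InjOn (fun p => e p 0) S := by
  obtain ⟨t, ht⟩ := Infinite.exists_notMem_finset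
    (S.offDiag.image fun pq : Pt × Pt => (pq.2 0 - pq.1 0) / (pq.1 1 - pq.2 1))
  let f : Module.Dual ℝ Pt := t • EuclideanSpace.projₗ 1
  have hf : f (EuclideanSpace.single 0 1) = 0 := by simp [f]
  have he (x : Pt) : LinearEquiv.transvection hf x 0 = x 0 + t * x 1 := by
    simp only [LinearEquiv.transvection.apply, f]
    simp
  refine ⟨LinearEquiv.transvection hf, fun p hp q hq hpq => ?_⟩
  simp only [he] at hpq
  by_contra hne
  by_cases h1 : p 1 = q 1
  · exact hne (Pt.ext (by simpa [h1] using hpq) h1)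
  · refine ht (Finset.mem_image.2 ⟨(p, q), Finset.mem_offDiag.2 ⟨hp, hq, hne⟩, ?_⟩)
    field_simp [sub_ne_zero.2 h1]
    linarith

theorem exists_polyline_cover {k : ℕ} (hk : 2 ≤ k) (S : Finset Pt) :
    ∃ l : List Pt, (∀ p ∈ S, p ∈ polyline l) ∧
      (l.length : ℝ) ≤ S.card / 2 + 2 * S.card / k + 4 ^ k := by
  classical
  obtain ⟨e, he⟩ := exists_linearEquiv_injOn S
  obtain ⟨l, hcover, hl⟩ := exists_polyline_cover_of_injOn hk (S.image e)
    (by rw [Finset.coe_image]; exact he.image_of_comp)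
  rw [Finset.card_image_of_injective S e.injective] at hl
  let g : Pt →ᵃ[ℝ] Pt := e.symm.toLinearMap.toAffineMap
  refine ⟨l.map g, fun p hp => ?_, by simpa using hl⟩
  simpa [g] using mem_polyline_map g (hcover (e p) (Finset.mem_image_of_mem e hp))

theorem log_le_two_mul_sqrt {x : ℝ} (hx : 0 < x) : Real.log x ≤ 2 * √x := by
  have := Real.log_le_sub_one_of_pos (Real.sqrt_pos.2 hx)
  rw [Real.log_sqrt hx.le] at this
  linarith

theorem two_mul_div_add_four_pow_le {n : ℕ} (hn : 2 ≤ n) :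
    2 * (n : ℝ) / (Nat.log 2 n / 4 + 2 : ℕ) + 4 ^ (Nat.log 2 n / 4 + 2) ≤ 40 * n / Real.log n := by
  set L := Nat.log 2 n
  set k := L / 4 + 2
  have hn0 : (0 : ℝ) < n := by positivity
  have hlog : 0 < Real.log n := Real.log_pos (by exact_mod_cast hn)
  have hlogk : Real.log n ≤ 4 * k := by
    have hnL : (n : ℝ) < 2 ^ (L + 1) := by exact_mod_cast Nat.lt_pow_succ_log_self one_lt_two n
    have hL : (L : ℝ) + 1 ≤ 4 * k := by exact_mod_cast (by omega : L + 1 ≤ 4 * k)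
    calc Real.log n ≤ Real.log (2 ^ (L + 1)) := Real.log_le_log hn0 hnL.le
      _ = (L + 1) * Real.log 2 := by rw [Real.log_pow]; push_cast; ring
      _ ≤ (L + 1) * 1 := by gcongr; linarith [Real.log_two_lt_d9]
      _ ≤ 4 * k := by linarith
  have hsqrt : (2 : ℝ) ^ (L / 4 * 2) ≤ √n := by
    refine Real.le_sqrt_of_sq_le ?_
    rw [← pow_mul]
    exact_mod_cast
      (Nat.pow_le_pow_right two_pos (by omega)).trans (Nat.pow_log_le_self 2 (by omega))
  have hsqrt_log : √n * Real.log n ≤ 2 * n :=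
    calc √n * Real.log n ≤ √n * (2 * √n) := by gcongr; exact log_le_two_mul_sqrt hn0
      _ = 2 * n := by rw [mul_left_comm, Real.mul_self_sqrt hn0.le]
  have hk : 2 * (n : ℝ) / k ≤ 8 * n / Real.log n := by
    rw [div_le_div_iff₀ (by positivity) hlog]
    nlinarith
  have hpow : (4 : ℝ) ^ k ≤ 16 * (2 * n / Real.log n) := by
    rw [show (4 : ℝ) ^ k = 16 * 2 ^ (L / 4 * 2) by rw [pow_mul', pow_add]; norm_num; ring]
    gcongr
    exact hsqrt.trans ((le_div_iff₀ hlog).2 hsqrt_log)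
  calc 2 * (n : ℝ) / k + 4 ^ k ≤ 8 * n / Real.log n + 16 * (2 * n / Real.log n) :=
        add_le_add hk hpow
    _ = 40 * n / Real.log n := by ring

/-- Every set of `n ≥ 2` points admits a covering path with
`n/2 + O(n / log n)` segments. -/
theorem stmt_1 :
    ∃ C : ℝ, 0 < C ∧ ∀ n : ℕ, 2 ≤ n → ∀ S : Finset Pt, S.card = n →
      ∃ (m : ℕ) (v : Fin (m + 1) → Pt),
        IsCoveringPath (S : Set Pt) m v ∧
        (m : ℝ) ≤ (n : ℝ) / 2 + C * (n : ℝ) / Real.log (n : ℝ) := by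
  refine ⟨40, by norm_num, fun n hn S hS => ?_⟩
  obtain ⟨l, hcover, hl⟩ := exists_polyline_cover (k := Nat.log 2 n / 4 + 2) (by omega) S
  have hSne : (S : Set Pt).Nonempty := by
    rw [Finset.coe_nonempty, ← Finset.card_pos]
    omega
  obtain ⟨m, v, hv, hm⟩ := exists_isCoveringPath_of_subset_polyline hSne hcover
  refine ⟨m, v, hv, ?_⟩
  have hml : (m : ℝ) + 1 = l.length := by exact_mod_cast hm
  have := two_mul_div_add_four_pow_le hn
  rw [hS] at hl
  linarith
end
end

section
/- Let C ⊆ ℝ² be a closed convex set with nonempty interior, let X be a finite nonempty set of n points contained in the interior of C, and let a and b be two distinct points on the frontier of C. Then X ∪ {a, b} admits a noncrossing covering path with n + 1 segments whose first vertex is a and whose last vertex is b, and such that every point of the path other than a and b lies in the interior of C. -/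
/-!
Separate `a` from `conv (X ∪ {b})` and `b` from `conv (X ∪ {a})`: this gives affine functions
`t` vanishing at `a` and `s` vanishing at `b`, both negative on `X`, with `s a < 0` and `t b < 0`.
Under `z ↦ (s z, t z)` the points of `X` land in the open negative quadrant and `a`, `b` on its two
boundary rays; perturbing `s` generically makes the directions of the images of `X` distinct.
Ordering `X` by the slope `t / s` between `a` and `b` makes the cross product
`s x * t y - t x * s y` positive for every pair of vertices `x` before `y`, so the path winds
monotonically around the apex of the quadrant, and distinct segments can only meet in a shared
vertex. Every segment has an endpoint in `interior C`, which keeps the path inside.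
-/

noncomputable section

open scoped RealInnerProductSpace

open Set

namespace Fin

variable {α : Type*} {R : α → α → Prop} {m : ℕ}

theorem cons_rel_of_lt {a : α} {f : Fin m → α} (ha : ∀ i, R a (f i))
    (hf : ∀ i j, i < j → R (f i) (f j)) :
    ∀ i j : Fin (m + 1), i < j →
      R (cons (α := fun _ => α) a f i) (cons (α := fun _ => α) a f j) := by
  intro i j hij
  cases j using Fin.cases with
  | zero => exact absurd hij (not_lt_zero i)
  | succ j =>
    cases i using Fin.cases with
    | zero => simpa using ha j
    | succ i => simpa using hf i j (succ_lt_succ_iff.1 hij)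

theorem snoc_rel_of_lt {b : α} {f : Fin m → α} (hb : ∀ i, R (f i) b)
    (hf : ∀ i j, i < j → R (f i) (f j)) :
    ∀ i j : Fin (m + 1), i < j →
      R (snoc (α := fun _ => α) f b i) (snoc (α := fun _ => α) f b j) := by
  intro i j hij
  cases i using Fin.lastCases with
  | last => exact absurd hij (not_lt.2 (le_last j))
  | cast i =>
    cases j using Fin.lastCases with
    | last => simpa using hb i
    | cast j => simpa using hf i j (castSucc_lt_castSucc_iff.1 hij)

theorem cons_snoc_mem_range {a b : α} {f : Fin m → α} {k : Fin (m + 2)} (h0 : k ≠ 0)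
    (hlast : k ≠ last (m + 1)) : cons (α := fun _ => α) a (snoc f b) k ∈ Set.range f := by
  cases k using Fin.cases with
  | zero => exact absurd rfl h0
  | succ k =>
    cases k using Fin.lastCases with
    | last => exact absurd rfl hlast
    | cast k => simp

end Fin

theorem Finset.exists_range_eq_strictMono_comp {α β : Type*} [LinearOrder β] (X : Finset α)
    {r : α → β} (hr : Set.InjOn r X) :
    ∃ e : Fin X.card → α, Set.range e = X ∧ StrictMono (r ∘ e) := by
  classical
  set o := (X.image r).orderEmbOfFin (card_image_of_injOn hr)
  choose e heX her using fun i => mem_image.1 ((X.image r).orderEmbOfFin_mem _ i)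
  refine ⟨e, Set.Subset.antisymm (Set.range_subset_iff.2 heX) fun x hx => ?_, ?_⟩
  · obtain ⟨i, hi⟩ : r x ∈ Set.range o := by
      rw [range_orderEmbOfFin]; exact mem_image_of_mem r hx
    exact ⟨i, hr (heX i) hx ((her i).trans hi)⟩
  · intro i j hij
    simp only [Function.comp, her]
    exact o.strictMono hij

section Convexity

variable {E : Type*} [AddCommGroup E] [Module ℝ E] [TopologicalSpace E]
  [IsTopologicalAddGroup E] [ContinuousConstSMul ℝ E] {C : Set E}

theorem Convex.segment_diff_subset_interior (hC : Convex ℝ C) {x y : E}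
    (hx : x ∈ interior C) (hy : y ∈ closure C) : segment ℝ x y \ {y} ⊆ interior C := by
  rintro z ⟨hz, hzy⟩
  rw [← insert_endpoints_openSegment] at hz
  rcases hz with rfl | rfl | hz
  · exact hx
  · exact absurd rfl hzy
  · exact hC.openSegment_interior_closure_subset_interior hx hy hz

theorem Convex.notMem_convexHull_insert (hC : Convex ℝ C) {X : Set E} (hX : X ⊆ interior C)
    (hXne : X.Nonempty) {p q : E} (hp : p ∉ interior C) (hq : q ∈ closure C) (hpq : p ≠ q) :
    p ∉ convexHull ℝ (insert q X) := by
  rw [convexHull_insert hXne, mem_convexJoin]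
  rintro ⟨q, rfl, z, hz, hpz⟩
  rw [segment_symm] at hpz
  exact hp (hC.segment_diff_subset_interior (convexHull_min hX hC.interior hz) hq ⟨hpz, hpq⟩)

end Convexity

namespace AffineMap

variable {E : Type*} [AddCommGroup E] [Module ℝ E] (s t : E →ᵃ[ℝ] ℝ)

def cross (x y : E) : ℝ := s x * t y - t x * s y

theorem cross_self (x : E) : cross s t x x = 0 := by
  rw [cross, mul_comm, sub_self]

theorem cross_combo_combo {α β γ δ : ℝ} (hαβ : α + β = 1) (hγδ : γ + δ = 1) (x x' y y' : E) :
    cross s t (α • x + β • x') (γ • y + δ • y') =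
      α * γ * cross s t x y + α * δ * cross s t x y' +
        β * γ * cross s t x' y + β * δ * cross s t x' y' := by
  simp only [cross, Convex.combo_affine_apply hαβ, Convex.combo_affine_apply hγδ, smul_eq_mul]
  ring

theorem cross_eq_mul_mul_div_sub_div {x y : E} (hx : s x ≠ 0) (hy : s y ≠ 0) :
    cross s t x y = s x * s y * (t y / s y - t x / s x) := by
  rw [cross]
  field_simp

theorem cross_pos_of_right_eq_zero {a y : E} (hta : t a = 0) (hsa : s a < 0) (hty : t y < 0) :
    0 < cross s t a y := by
  rw [cross, hta, zero_mul, sub_zero]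
  exact mul_pos_of_neg_of_neg hsa hty

theorem cross_pos_of_left_eq_zero {x b : E} (hsb : s b = 0) (htb : t b < 0) (hsx : s x < 0) :
    0 < cross s t x b := by
  rw [cross, hsb, mul_zero, sub_zero]
  exact mul_pos_of_neg_of_neg hsx htb

theorem segment_inter_segment_eq_empty_of_cross_pos {x x' y y' : E}
    (h₁ : 0 < cross s t x y) (h₂ : 0 < cross s t x y') (h₃ : 0 < cross s t x' y)
    (h₄ : 0 < cross s t x' y') : segment ℝ x x' ∩ segment ℝ y y' = ∅ := by
  refine eq_empty_iff_forall_notMem.2 ?_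
  rintro z ⟨⟨α, β, hα, hβ, hαβ, rfl⟩, ⟨γ, δ, hγ, hδ, hγδ, hz⟩⟩
  -- `0 = cross z z` is a combination of the four positive crosses with weights summing to `1`.
  have h := cross_self s t (α • x + β • x')
  nth_rewrite 2 [← hz] at h
  rw [cross_combo_combo s t hαβ hγδ] at h
  obtain ⟨c, hc, hc₁, hc₂, hc₃, hc₄⟩ : ∃ c > 0, c ≤ cross s t x y ∧ c ≤ cross s t x y' ∧
      c ≤ cross s t x' y ∧ c ≤ cross s t x' y' :=
    ⟨min (min _ _) (min _ _), lt_min (lt_min h₁ h₂) (lt_min h₃ h₄), by simp⟩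
  have hsplit : c = α * γ * c + α * δ * c + β * γ * c + β * δ * c := by
    linear_combination (-c) * ((γ + δ) * hαβ + hγδ)
  linarith [mul_le_mul_of_nonneg_left hc₁ (mul_nonneg hα hγ),
    mul_le_mul_of_nonneg_left hc₂ (mul_nonneg hα hδ),
    mul_le_mul_of_nonneg_left hc₃ (mul_nonneg hβ hγ),
    mul_le_mul_of_nonneg_left hc₄ (mul_nonneg hβ hδ)]

theorem segment_inter_segment_eq_singleton_of_cross_pos {x y z : E}
    (h₁ : 0 < cross s t x y) (h₂ : 0 < cross s t x z) (h₃ : 0 < cross s t y z) :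
    segment ℝ x y ∩ segment ℝ y z = {y} := by
  refine Subset.antisymm ?_
    (singleton_subset_iff.2 ⟨right_mem_segment ℝ x y, left_mem_segment ℝ y z⟩)
  rintro w ⟨⟨α, β, hα, hβ, hαβ, rfl⟩, ⟨γ, δ, hγ, hδ, hγδ, hw⟩⟩
  have h := cross_self s t (α • x + β • y)
  nth_rewrite 2 [← hw] at h
  rw [cross_combo_combo s t hαβ hγδ, cross_self, mul_zero, add_zero] at h
  have hα0 : α = 0 := by
    obtain ⟨c, hc, hc₁, hc₂⟩ : ∃ c > 0, c ≤ cross s t x y ∧ c ≤ cross s t x z :=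
      ⟨min _ _, lt_min h₁ h₂, by simp⟩
    have hsplit : α * c = α * γ * c + α * δ * c := by linear_combination (-(α * c)) * hγδ
    have hαc : α * c ≤ 0 * c := by
      linarith [mul_le_mul_of_nonneg_left hc₁ (mul_nonneg hα hγ),
        mul_le_mul_of_nonneg_left hc₂ (mul_nonneg hα hδ),
        mul_nonneg (mul_nonneg hβ hδ) h₃.le]
    exact le_antisymm (le_of_mul_le_mul_right hαc hc) hα
  obtain rfl : β = 1 := by linarith
  rw [hα0, zero_smul, one_smul, zero_add, mem_singleton_iff]

theorem smul_sub_sub_smul_sub_ne_zero {b x y : E} (htb : t b ≠ 0) (htx : t x ≠ 0)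
    (hxy : x ≠ y) : t y • (x - b) - t x • (y - b) ≠ 0 := by
  intro hw
  have hlin : t.linear (t y • (x - b) - t x • (y - b)) = t b * (t x - t y) := by
    rw [map_sub, map_smul, map_smul, ← vsub_eq_sub x b, ← vsub_eq_sub y b,
      AffineMap.linearMap_vsub, AffineMap.linearMap_vsub]
    simp only [vsub_eq_sub, smul_eq_mul]
    ring
  rw [hw, map_zero, eq_comm, mul_eq_zero, sub_eq_zero] at hlin
  have htxy := hlin.resolve_left htb
  rw [← htxy, ← smul_sub, sub_sub_sub_cancel_right, smul_eq_zero, sub_eq_zero] at hw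
  exact hw.elim htx hxy

theorem exists_range_eq_cross_pos (X : Finset E) (hs : ∀ x ∈ X, s x < 0)
    (hgen : ∀ x ∈ X, ∀ y ∈ X, x ≠ y → s.cross t x y ≠ 0) :
    ∃ e : Fin X.card → E, Set.range e = X ∧ ∀ i j, i < j → 0 < s.cross t (e i) (e j) := by
  have hcross : ∀ x ∈ X, ∀ y ∈ X, s.cross t x y = s x * s y * (t y / s y - t x / s x) :=
    fun x hx y hy => s.cross_eq_mul_mul_div_sub_div t (hs x hx).ne (hs y hy).ne
  have hinj : Set.InjOn (fun z => t z / s z) X := fun x hx y hy hxy => by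
    by_contra hne
    refine hgen x hx y hy hne ?_
    rw [hcross x hx y hy, show t y / s y = t x / s x from hxy.symm, sub_self, mul_zero]
  obtain ⟨e, he, hmono⟩ := X.exists_range_eq_strictMono_comp hinj
  have heX : ∀ i, e i ∈ X := fun i => Finset.mem_coe.1 (he ▸ mem_range_self i)
  refine ⟨e, he, fun i j hij => ?_⟩
  rw [hcross _ (heX i) _ (heX j)]
  exact mul_pos (mul_pos_of_neg_of_neg (hs _ (heX i)) (hs _ (heX j))) (sub_pos.2 (hmono hij))

theorem cross_pos_cons_snoc {m : ℕ} {a b : E} {e : Fin m → E} (hsa : s a < 0) (hta : t a = 0)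
    (hsb : s b = 0) (htb : t b < 0) (he : ∀ i, s (e i) < 0 ∧ t (e i) < 0)
    (hcross : ∀ i j, i < j → 0 < s.cross t (e i) (e j)) (i j : Fin (m + 2)) (hij : i < j) :
    0 < s.cross t (Fin.cons (α := fun _ => E) a (Fin.snoc e b) i)
      (Fin.cons (α := fun _ => E) a (Fin.snoc e b) j) := by
  refine Fin.cons_rel_of_lt (R := fun x y => 0 < s.cross t x y) (fun k => ?_)
    (Fin.snoc_rel_of_lt (R := fun x y => 0 < s.cross t x y) (b := b)
      (fun k => s.cross_pos_of_left_eq_zero t hsb htb (he k).1) hcross) i j hij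
  cases k using Fin.lastCases with
  | last => simpa using s.cross_pos_of_right_eq_zero t hta hsa htb
  | cast k => simpa using s.cross_pos_of_right_eq_zero t hta hsa (he k).2

end AffineMap

section InnerProduct

open MeasureTheory

variable {E : Type*} [NormedAddCommGroup E] [InnerProductSpace ℝ E]

theorem exists_inner_sub_neg_of_notMem_convexHull [CompleteSpace E] {T : Set E}
    (hT : T.Finite) {p : E} (hp : p ∉ convexHull ℝ T) : ∃ u : E, ∀ z ∈ T, ⟪u, z - p⟫ < 0 := by
  obtain ⟨f, c, hfT, hfp⟩ := geometric_hahn_banach_closed_point (convex_convexHull ℝ T)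
    (hT.isCompact_convexHull (𝕜 := ℝ)).isClosed hp
  refine ⟨(InnerProductSpace.toDual ℝ E).symm f, fun z hz => ?_⟩
  rw [inner_sub_right, InnerProductSpace.toDual_symm_apply, InnerProductSpace.toDual_symm_apply]
  linarith [hfT z (subset_convexHull ℝ T hz)]

theorem IsOpen.exists_forall_inner_ne_zero [FiniteDimensional ℝ E] {U : Set E} (hU : IsOpen U)
    (hUne : U.Nonempty) {W : Set E} (hW : W.Finite) (hW0 : (0 : E) ∉ W) :
    ∃ u ∈ U, ∀ w ∈ W, ⟪u, w⟫ ≠ 0 := by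
  borelize E
  have hnull : Measure.addHaar (⋃ w ∈ W, ((ℝ ∙ w)ᗮ : Set E)) = 0 := by
    refine (measure_biUnion_null_iff hW.countable).2 fun w hw => ?_
    refine Measure.addHaar_submodule _ _ fun htop => ?_
    have hww : w ∈ (ℝ ∙ w)ᗮ := htop ▸ Submodule.mem_top
    rw [Submodule.mem_orthogonal_singleton_iff_inner_right, inner_self_eq_zero] at hww
    exact hW0 (hww ▸ hw)
  obtain ⟨u, huU, hu⟩ := not_subset.1 fun hsub =>
    (hU.measure_pos Measure.addHaar hUne).ne' (measure_mono_null hsub hnull)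
  refine ⟨u, huU, fun w hw hwu => hu (mem_biUnion hw ?_)⟩
  rwa [SetLike.mem_coe, Submodule.mem_orthogonal_singleton_iff_inner_right, real_inner_comm]

def innerSubAffine (u p : E) : E →ᵃ[ℝ] ℝ :=
  (innerₛₗ ℝ u).toAffineMap - AffineMap.const ℝ E ⟪u, p⟫

@[simp]
theorem innerSubAffine_apply (u p z : E) : innerSubAffine u p z = ⟪u, z - p⟫ := by
  simp [innerSubAffine, inner_sub_right]

theorem AffineMap.cross_innerSubAffine_left (t : E →ᵃ[ℝ] ℝ) (u b x y : E) :
    (innerSubAffine u b).cross t x y = ⟪u, t y • (x - b) - t x • (y - b)⟫ := by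
  simp only [AffineMap.cross, innerSubAffine_apply, inner_sub_right, real_inner_smul_right]
  ring

theorem exists_innerSubAffine_cross_ne_zero [FiniteDimensional ℝ E] (t : E →ᵃ[ℝ] ℝ)
    {X : Finset E} {P : Set E} (hP : P.Finite) {b u₀ : E} (htb : t b ≠ 0)
    (htX : ∀ x ∈ X, t x ≠ 0) (hu₀ : ∀ z ∈ P, ⟪u₀, z - b⟫ < 0) :
    ∃ u : E, (∀ z ∈ P, ⟪u, z - b⟫ < 0) ∧
      ∀ x ∈ X, ∀ y ∈ X, x ≠ y → (innerSubAffine u b).cross t x y ≠ 0 := by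
  classical
  set w : E × E → E := fun q => t q.2 • (q.1 - b) - t q.1 • (q.2 - b)
  have hU : IsOpen (⋂ z ∈ P, {u : E | ⟪u, z - b⟫ < 0}) :=
    hP.isOpen_biInter fun z _ => isOpen_lt (continuous_id.inner continuous_const) continuous_const
  have hW0 : (0 : E) ∉ (X.offDiag.image w : Set E) := by
    intro h0
    obtain ⟨⟨x, y⟩, hxy, hw⟩ := Finset.mem_image.1 (Finset.mem_coe.1 h0)
    rw [Finset.mem_offDiag] at hxy
    exact t.smul_sub_sub_smul_sub_ne_zero htb (htX x hxy.1) hxy.2.2 hw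
  obtain ⟨u, hu, hgen⟩ := hU.exists_forall_inner_ne_zero ⟨u₀, mem_iInter₂.2 hu₀⟩
    (Finset.finite_toSet _) hW0
  refine ⟨u, by simpa using hu, fun x hx y hy hxy => ?_⟩
  rw [AffineMap.cross_innerSubAffine_left]
  exact hgen _ (Finset.mem_coe.2
    (Finset.mem_image_of_mem w (a := (x, y)) (Finset.mem_offDiag.2 ⟨hx, hy, hxy⟩)))

end InnerProduct

theorem Convex.exists_affine_quadrant {E : Type*} [NormedAddCommGroup E] [InnerProductSpace ℝ E]
    [FiniteDimensional ℝ E] {C : Set E} (hC : Convex ℝ C) {X : Finset E} (hXne : X.Nonempty)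
    (hX : (X : Set E) ⊆ interior C) {a b : E} (haC : a ∈ closure C) (ha : a ∉ interior C)
    (hbC : b ∈ closure C) (hb : b ∉ interior C) (hab : a ≠ b) :
    ∃ s t : E →ᵃ[ℝ] ℝ, s a < 0 ∧ t a = 0 ∧ s b = 0 ∧ t b < 0 ∧ (∀ x ∈ X, s x < 0 ∧ t x < 0) ∧
      ∀ x ∈ X, ∀ y ∈ X, x ≠ y → s.cross t x y ≠ 0 := by
  obtain ⟨u₁, hu₁⟩ := exists_inner_sub_neg_of_notMem_convexHull (X.finite_toSet.insert b)
    (hC.notMem_convexHull_insert hX hXne ha hbC hab)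
  obtain ⟨u₀, hu₀⟩ := exists_inner_sub_neg_of_notMem_convexHull (X.finite_toSet.insert a)
    (hC.notMem_convexHull_insert hX hXne hb haC hab.symm)
  set t := innerSubAffine u₁ a
  have htb : t b < 0 := by simpa [t] using hu₁ b (mem_insert b _)
  have htX : ∀ x ∈ X, t x < 0 := fun x hx => by simpa [t] using hu₁ x (mem_insert_of_mem _ hx)
  obtain ⟨u, hu, hgen⟩ := exists_innerSubAffine_cross_ne_zero t (X.finite_toSet.insert a)
    htb.ne (fun x hx => (htX x hx).ne) hu₀
  refine ⟨innerSubAffine u b, t, by simpa using hu a (mem_insert a _), by simp [t], by simp, htb,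
    fun x hx => ⟨by simpa using hu x (mem_insert_of_mem _ hx), htX x hx⟩, hgen⟩

theorem isNoncrossing_of_cross_pos (s t : Pt →ᵃ[ℝ] ℝ) {m : ℕ} (v : Fin (m + 1) → Pt)
    (hv : ∀ i j, i < j → 0 < s.cross t (v i) (v j)) : IsNoncrossing m v := by
  have hv' : ∀ k l : Fin (m + 1), (k : ℕ) < l → 0 < s.cross t (v k) (v l) := hv
  intro i j hij
  have hij' : (i : ℕ) < j := hij
  refine ⟨fun hji => ?_, fun hji => ?_⟩
  · have hj : j.castSucc = i.succ := Fin.ext (by simp [hji])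
    rw [pathSeg, pathSeg, hj]
    exact s.segment_inter_segment_eq_singleton_of_cross_pos t (hv' _ _ (by simp))
      (hv' _ _ (by simp; omega)) (hv' _ _ (by simp; omega))
  · exact s.segment_inter_segment_eq_empty_of_cross_pos t (hv' _ _ (by simpa using hij'))
      (hv' _ _ (by simp; omega)) (hv' _ _ (by simp; omega)) (hv' _ _ (by simpa using hij'))

theorem isCoveringPath_of_subset_range {S : Set Pt} {m : ℕ} {v : Fin (m + 2) → Pt}
    (h : S ⊆ Set.range v) : IsCoveringPath S (m + 1) v := by
  intro p hp
  obtain ⟨k, rfl⟩ := h hp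
  cases k using Fin.cases with
  | zero => exact ⟨0, left_mem_segment ℝ _ _⟩
  | succ i => exact ⟨i, right_mem_segment ℝ _ _⟩

theorem iUnion_pathSeg_diff_subset_interior {C : Set Pt} (hC : Convex ℝ C) {m : ℕ} (hm : 1 < m)
    {v : Fin (m + 1) → Pt} (h0 : v 0 ∈ closure C) (hlast : v (Fin.last m) ∈ closure C)
    (hmid : ∀ k, k ≠ 0 → k ≠ Fin.last m → v k ∈ interior C) :
    (⋃ i, pathSeg v i) \ {v 0, v (Fin.last m)} ⊆ interior C := by
  rintro z ⟨hz, hzv⟩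
  obtain ⟨i, hzi⟩ := mem_iUnion.1 hz
  have hleft : i.castSucc ≠ Fin.last m := (Fin.castSucc_lt_last i).ne
  by_cases hi0 : i.castSucc = 0
  · have hright : i.succ ≠ Fin.last m := fun h => by
      have h₁ : (i : ℕ) = 0 := by simpa using congrArg Fin.val hi0
      have h₂ : (i : ℕ) + 1 = m := by simpa using congrArg Fin.val h
      omega
    rw [pathSeg, segment_symm, hi0] at hzi
    exact hC.segment_diff_subset_interior (hmid _ (Fin.succ_ne_zero i) hright) h0
      ⟨hzi, fun h => hzv (Or.inl h)⟩
  by_cases hil : i.succ = Fin.last m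
  · rw [pathSeg, hil] at hzi
    exact hC.segment_diff_subset_interior (hmid _ hi0 hleft) hlast ⟨hzi, fun h => hzv (Or.inr h)⟩
  exact hC.interior.segment_subset (hmid _ hi0 hleft) (hmid _ (Fin.succ_ne_zero i) hil) hzi

theorem stmt_3_general (C : Set Pt) (hconv : Convex ℝ C) (hcl : IsClosed C)
    (X : Finset Pt) (n : ℕ) (hn : X.card = n)
    (hne : X.Nonempty) (hX : (X : Set Pt) ⊆ interior C)
    (a b : Pt) (ha : a ∈ frontier C) (hb : b ∈ frontier C) (hab : a ≠ b) :
    ∃ v : Fin (n + 2) → Pt,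
      IsCoveringPath ((X : Set Pt) ∪ {a, b}) (n + 1) v ∧
      IsNoncrossing (n + 1) v ∧
      v 0 = a ∧ v (Fin.last (n + 1)) = b ∧
      (⋃ i : Fin (n + 1), pathSeg v i) \ {a, b} ⊆ interior C := by
  rw [hcl.frontier_eq] at ha hb
  obtain ⟨s, t, hsa, hta, hsb, htb, hXst, hgen⟩ := hconv.exists_affine_quadrant hne hX
    (subset_closure ha.1) ha.2 (subset_closure hb.1) hb.2 hab
  obtain ⟨e, he, hcross⟩ := s.exists_range_eq_cross_pos t X (fun x hx => (hXst x hx).1) hgen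
  have heX : ∀ i, e i ∈ X := fun i => Finset.mem_coe.1 (he ▸ mem_range_self i)
  subst hn
  set v : Fin (X.card + 2) → Pt := Fin.cons a (Fin.snoc e b)
  have hv0 : v 0 = a := rfl
  have hvlast : v (Fin.last (X.card + 1)) = b := by simp [v]
  have hvX : ∀ k, k ≠ 0 → k ≠ Fin.last _ → v k ∈ X := fun k hk0 hkl => by
    obtain ⟨i, hi⟩ := Fin.cons_snoc_mem_range (a := a) (b := b) (f := e) hk0 hkl
    exact (show v k = e i from hi.symm) ▸ heX i
  refine ⟨v, isCoveringPath_of_subset_range ?_,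
    isNoncrossing_of_cross_pos s t v (s.cross_pos_cons_snoc t hsa hta hsb htb
      (fun i => hXst _ (heX i)) hcross), hv0, hvlast, ?_⟩
  · rw [Fin.range_cons, Fin.range_snoc, he]
    exact union_subset ((subset_insert b _).trans (subset_insert a _))
      (insert_subset_insert (singleton_subset_iff.2 (mem_insert _ _)))
  · have h := iUnion_pathSeg_diff_subset_interior hconv (by have := hne.card_pos; omega)
      (hv0 ▸ subset_closure ha.1) (hvlast ▸ subset_closure hb.1)
      fun k hk0 hkl => hX (hvX k hk0 hkl)
    rwa [hv0, hvlast] at h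

/-- `n` points in the interior of a closed convex set `C` together with two
distinct points `a, b` on its frontier admit a noncrossing covering path with
`n + 1` segments from `a` to `b` whose points other than `a` and `b` lie in
the interior of `C`. -/
theorem stmt_3 (C : Set Pt) (hconv : Convex ℝ C) (hcl : IsClosed C)
    (hint : (interior C).Nonempty) (X : Finset Pt) (n : ℕ) (hn : X.card = n)
    (hne : X.Nonempty) (hX : (X : Set Pt) ⊆ interior C)
    (a b : Pt) (ha : a ∈ frontier C) (hb : b ∈ frontier C) (hab : a ≠ b) :
    ∃ v : Fin (n + 2) → Pt,
      IsCoveringPath ((X : Set Pt) ∪ {a, b}) (n + 1) v ∧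
      IsNoncrossing (n + 1) v ∧
      v 0 = a ∧ v (Fin.last (n + 1)) = b ∧
      (⋃ i : Fin (n + 1), pathSeg v i) \ {a, b} ⊆ interior C :=
  stmt_3_general C hconv hcl X n hn hne hX a b ha hb hab
end
end

section
/- For every angle φ ∈ (0, π/2) and every ε > 0 there exists δ with 0 < δ < ε such that the following holds: for every point c ∈ ℝ² and any two nondegenerate closed segments [p, q] and [r, s] in ℝ² whose relative interiors (open segments) are disjoint, if each of the two segments contains two distinct points at distance exactly ε from c and also contains two distinct points at distance exactly δ from c, then the acute angle between the supporting lines of the two segments is at most φ; equivalently, |⟨q − p, s − r⟩| ≥ cos(φ) · ‖q − p‖ · ‖s − r‖. -/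
/-! If the supporting lines made an angle larger than `φ`, they would meet at a point `z`.
Each segment has a point at distance `δ` from `c`, and these two points are at most `2δ` apart,
so by the law of sines `z` lies within `δ + 2δ / sin φ < ε` of `c` once `δ = ε sin φ / 4`.
A point of a line strictly inside a circle lies strictly between the two points where the line
meets the circle, so `z` would lie on both open segments. -/

noncomputable section

open scoped RealInnerProductSpace

/-- The segment `[a, b]` traverses the circle of radius `r` centered at `c`:
it contains two distinct points at distance exactly `r` from `c`. -/
def Traverses (a b c : Pt) (r : ℝ) : Prop :=
  ∃ x ∈ segment ℝ a b, ∃ y ∈ segment ℝ a b, x ≠ y ∧ dist x c = r ∧ dist y c = r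

theorem openSegment_subset_openSegment_of_mem_segment {𝕜 E : Type*} [Field 𝕜] [LinearOrder 𝕜]
    [IsStrictOrderedRing 𝕜] [AddCommGroup E] [Module 𝕜 E] {p q x y : E}
    (hx : x ∈ segment 𝕜 p q) (hy : y ∈ segment 𝕜 p q) (hxy : x ≠ y) :
    openSegment 𝕜 x y ⊆ openSegment 𝕜 p q := by
  rw [segment_eq_image_lineMap] at hx hy
  obtain ⟨s, ⟨hs0, hs1⟩, rfl⟩ := hx
  obtain ⟨t, ⟨ht0, ht1⟩, rfl⟩ := hy
  have hst : s ≠ t := by rintro rfl; exact hxy rfl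
  rw [← image_openSegment, openSegment_eq_image_lineMap 𝕜 p q, openSegment_eq_Ioo' hst]
  exact Set.image_mono (Set.Ioo_subset_Ioo (le_min hs0 ht0) (max_le hs1 ht1))

theorem add_smul_sub_mem_affineSpan_pair {k V : Type*} [Ring k] [AddCommGroup V] [Module k V]
    {p q x : V} (hx : x ∈ line[k, p, q]) (a : k) : x + a • (q - p) ∈ line[k, p, q] := by
  rw [add_comm]
  exact AffineSubspace.vadd_mem_of_mem_direction
    (by rw [direction_affineSpan]; exact mem_vectorSpan_pair_rev.2 ⟨a, rfl⟩) hx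

theorem mem_openSegment_of_mem_affineSpan_of_dist_lt {E : Type*} [NormedAddCommGroup E]
    [NormedSpace ℝ E] [StrictConvexSpace ℝ E] {p q x y z c : E} {ε : ℝ}
    (hx : x ∈ segment ℝ p q) (hy : y ∈ segment ℝ p q) (hxy : x ≠ y)
    (hxc : dist x c = ε) (hyc : dist y c = ε) (hz : z ∈ line[ℝ, p, q]) (hzc : dist z c < ε) :
    z ∈ openSegment ℝ p q := by
  have hcol : Collinear ℝ {x, z, y} :=
    collinear_triple_of_mem_affineSpan_pair (mem_segment_iff_wbtw.1 hx).mem_affineSpan hz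
      (mem_segment_iff_wbtw.1 hy).mem_affineSpan
  apply openSegment_subset_openSegment_of_mem_segment hx hy hxy
  rw [openSegment_eq_image_lineMap]
  exact (hcol.sbtw_of_dist_eq_of_dist_lt hxc hzc hyc hxy).mem_image_Ioo

section InnerProductSpace

variable {E : Type*} [NormedAddCommGroup E] [InnerProductSpace ℝ E]

theorem sq_mul_sub_inner_sq_le_norm_smul_add_smul_sq (u v : E) (a b : ℝ) :
    a ^ 2 * (‖u‖ ^ 2 * ‖v‖ ^ 2 - ⟪u, v⟫ ^ 2) ≤ ‖a • u + b • v‖ ^ 2 * ‖v‖ ^ 2 := by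
  rw [← real_inner_self_eq_norm_sq, ← real_inner_self_eq_norm_sq, ← real_inner_self_eq_norm_sq]
  simp only [inner_add_left, inner_add_right, real_inner_smul_left, real_inner_smul_right,
    real_inner_comm u v]
  nlinarith [sq_nonneg (a * ⟪u, v⟫ + b * ⟪v, v⟫)]

theorem abs_mul_norm_mul_sin_le_norm_smul_add_smul {u v : E} (hv : v ≠ 0) {φ : ℝ}
    (huv : |⟪u, v⟫| ≤ Real.cos φ * (‖u‖ * ‖v‖)) (a b : ℝ) :
    |a| * ‖u‖ * Real.sin φ ≤ ‖a • u + b • v‖ := by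
  have hv2 : 0 < ‖v‖ ^ 2 := by positivity
  have hinner : ⟪u, v⟫ ^ 2 ≤ Real.cos φ ^ 2 * (‖u‖ ^ 2 * ‖v‖ ^ 2) := by
    rw [← sq_abs, ← mul_pow, ← mul_pow]
    exact pow_le_pow_left₀ (abs_nonneg _) huv 2
  refine le_of_pow_le_pow_left₀ two_ne_zero (norm_nonneg _) (le_of_mul_le_mul_right ?_ hv2)
  calc (|a| * ‖u‖ * Real.sin φ) ^ 2 * ‖v‖ ^ 2
      = a ^ 2 * (‖u‖ ^ 2 * ‖v‖ ^ 2 - Real.cos φ ^ 2 * (‖u‖ ^ 2 * ‖v‖ ^ 2)) := by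
        rw [mul_pow, mul_pow, sq_abs, Real.sin_sq]; ring
    _ ≤ a ^ 2 * (‖u‖ ^ 2 * ‖v‖ ^ 2 - ⟪u, v⟫ ^ 2) := by gcongr
    _ ≤ ‖a • u + b • v‖ ^ 2 * ‖v‖ ^ 2 := sq_mul_sub_inner_sq_le_norm_smul_add_smul_sq u v a b

theorem exists_smul_add_smul_eq_of_abs_inner_lt (h2 : Module.finrank ℝ E = 2) {u v : E}
    (huv : |⟪u, v⟫| < ‖u‖ * ‖v‖) (w : E) : ∃ a b : ℝ, a • u + b • v = w := by
  have hv : v ≠ 0 := by rintro rfl; simp at huv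
  have hgram : 0 < ‖u‖ ^ 2 * ‖v‖ ^ 2 - ⟪u, v⟫ ^ 2 := by
    have := sq_lt_sq' (neg_lt_of_abs_lt huv) (lt_of_abs_lt huv)
    nlinarith
  have hli : LinearIndependent ℝ ![u, v] := by
    refine LinearIndependent.pair_iff.2 fun a b hab => ?_
    have ha : a = 0 := by
      have h := sq_mul_sub_inner_sq_le_norm_smul_add_smul_sq u v a b
      rw [hab, norm_zero, zero_pow two_ne_zero, zero_mul] at h
      exact pow_eq_zero_iff two_ne_zero |>.1 <|
        le_antisymm (nonpos_of_mul_nonpos_left h hgram) (sq_nonneg a)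
    subst ha
    simpa [hv] using hab
  have hw : w ∈ Submodule.span ℝ {u, v} := by
    rw [← Matrix.range_cons_cons_empty, hli.span_eq_top_of_card_eq_finrank (by simp [h2])]
    trivial
  exact Submodule.mem_span_pair.1 hw

end InnerProductSpace

/-- For every angle `φ ∈ (0, π/2)` and every `ε > 0` there is `0 < δ < ε`
such that any two noncrossing segments that both traverse the circles of
radii `ε` and `δ` about a common center meet at an acute angle at most `φ`. -/
theorem stmt_8 (φ : ℝ) (hφ0 : 0 < φ) (hφ1 : φ < Real.pi / 2)
    (ε : ℝ) (hε : 0 < ε) :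
    ∃ δ : ℝ, 0 < δ ∧ δ < ε ∧
      ∀ c p q r s : Pt, p ≠ q → r ≠ s →
        Disjoint (openSegment ℝ p q) (openSegment ℝ r s) →
        Traverses p q c ε → Traverses p q c δ →
        Traverses r s c ε → Traverses r s c δ →
        |(inner ℝ (q - p) (s - r) : ℝ)| ≥ Real.cos φ * ‖q - p‖ * ‖s - r‖ := by
  have hsin : 0 < Real.sin φ := Real.sin_pos_of_pos_of_lt_pi hφ0 (by linarith [Real.pi_pos])
  have hsin1 := Real.sin_le_one φ
  refine ⟨ε * Real.sin φ / 4, by positivity, by nlinarith, ?_⟩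
  rintro c p q r s - hrs hdisj ⟨x₁, hx₁, y₁, hy₁, hxy₁, hx₁c, hy₁c⟩ ⟨m₁, hm₁, -, -, -, hm₁c, -⟩
    ⟨x₂, hx₂, y₂, hy₂, hxy₂, hx₂c, hy₂c⟩ ⟨m₂, hm₂, -, -, -, hm₂c, -⟩
  by_contra! hangle
  rw [mul_assoc] at hangle
  have hnonparallel : |⟪q - p, s - r⟫| < ‖q - p‖ * ‖s - r‖ :=
    hangle.trans_le (mul_le_of_le_one_left (by positivity) (Real.cos_le_one φ))
  obtain ⟨a, b, hab⟩ :=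
    exists_smul_add_smul_eq_of_abs_inner_lt finrank_euclideanSpace_fin hnonparallel (m₂ - m₁)
  have hmeet : m₁ + a • (q - p) = m₂ + (-b) • (s - r) := by
    linear_combination (norm := module) hab
  have hshift : |a| * ‖q - p‖ ≤ ε / 2 := by
    have h := abs_mul_norm_mul_sin_le_norm_smul_add_smul (sub_ne_zero.2 hrs.symm) hangle.le a b
    rw [hab, ← dist_eq_norm m₂ m₁] at h
    nlinarith [dist_triangle_right m₂ m₁ c]
  have hzc : dist (m₁ + a • (q - p)) c < ε := by
    have := dist_triangle (m₁ + a • (q - p)) m₁ c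
    rw [dist_self_add_left, norm_smul, Real.norm_eq_abs] at this
    nlinarith
  have hz₁ := mem_openSegment_of_mem_affineSpan_of_dist_lt hx₁ hy₁ hxy₁ hx₁c hy₁c
    (add_smul_sub_mem_affineSpan_pair (mem_segment_iff_wbtw.1 hm₁).mem_affineSpan a) hzc
  have hz₂ := mem_openSegment_of_mem_affineSpan_of_dist_lt hx₂ hy₂ hxy₂ hx₂c hy₂c
    (add_smul_sub_mem_affineSpan_pair (mem_segment_iff_wbtw.1 hm₂).mem_affineSpan (-b))
    (hmeet ▸ hzc)
  exact Set.disjoint_left.1 hdisj hz₁ (hmeet ▸ hz₂)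
end
end

section
/- For all disjoint nonempty finite sets R, B ⊆ ℝ² with |R| + |B| = n, there exist a noncrossing covering tree for R and a noncrossing covering tree for B such that the unions of the edge segments of the two trees are disjoint and the total number of edges of the two trees is at most n. -/
/-!
Choose a line `ℓ` with all points on one side and parallel to no line through two of them, put
the red apex far down `ℓ` and the blue apex far up `ℓ`, and join each apex to every point of its
colour. The points have distinct distances to `ℓ`, so a far enough apex sees no two of them
aligned and each star is a noncrossing tree with one edge per point. A red and a blue edge both
leave `ℓ`; over the range of distances covered by the shorter one, the height gap between them is
affine in the distance and positive at both ends (at `ℓ` because of the apexes, at the far end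
because a far apex sees a nearer point under a steeper slope), so the two stars never meet.
-/

noncomputable section

open scoped RealInnerProductSpace

/-- A noncrossing covering tree for `S` with vertex set `V`, edge structure `G`
and `m` edges: `G` is a tree on `V`; every point of `S` is a vertex or lies on
the segment of some edge; segments of distinct edges meet exactly in their
common endpoints; and no vertex lies in the relative interior of any edge. -/
def IsNCCoverTree (S : Set Pt) (V : Finset Pt)
    (G : SimpleGraph {x : Pt // x ∈ V}) (m : ℕ) : Prop :=
  G.Connected ∧ G.IsAcyclic ∧ G.edgeSet.ncard = m ∧
  (∀ p ∈ S, p ∈ V ∨ ∃ u w : {x : Pt // x ∈ V}, G.Adj u w ∧ p ∈ segment ℝ u.1 w.1) ∧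
  (∀ u w u' w' : {x : Pt // x ∈ V}, G.Adj u w → G.Adj u' w' →
    s(u, w) ≠ s(u', w') →
    segment ℝ u.1 w.1 ∩ segment ℝ u'.1 w'.1 =
      (({u.1, w.1} : Set Pt) ∩ ({u'.1, w'.1} : Set Pt))) ∧
  (∀ x u w : {x : Pt // x ∈ V}, G.Adj u w → x.1 ∉ openSegment ℝ u.1 w.1)

/-- The union of the edge segments of a covering tree. -/
def treeSegUnion (V : Finset Pt) (G : SimpleGraph {x : Pt // x ∈ V}) : Set Pt :=
  ⋃ (u : {x : Pt // x ∈ V}) (w : {x : Pt // x ∈ V}) (_ : G.Adj u w),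
    segment ℝ u.1 w.1

open Set Filter SimpleGraph

section Segments

variable {E : Type*} [AddCommGroup E] [Module ℝ E]

theorem segment_inter_segment_of_linearIndependent {c p q : E}
    (h : LinearIndependent ℝ ![p - c, q - c]) : segment ℝ c p ∩ segment ℝ c q = {c} := by
  refine eq_singleton_iff_unique_mem.2 ⟨⟨left_mem_segment ℝ c p, left_mem_segment ℝ c q⟩, ?_⟩
  rintro z ⟨hzp, hzq⟩
  rw [segment_eq_image'] at hzp hzq
  obtain ⟨s, -, rfl⟩ := hzp
  obtain ⟨t, -, hst⟩ := hzq
  obtain ⟨rfl, -⟩ := LinearIndependent.pair_iff.1 h s (-t) (by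
    rw [neg_smul, ← sub_eq_add_neg, sub_eq_zero, ← add_right_inj c]
    exact hst.symm)
  simp

theorem notMem_segment_of_linearIndependent {c p q : E}
    (h : LinearIndependent ℝ ![p - c, q - c]) : q ∉ segment ℝ c p := by
  rw [segment_eq_image']
  rintro ⟨s, -, hs⟩
  exact one_ne_zero (LinearIndependent.pair_iff.1 h (-s) 1 (by
    rw [← hs, add_sub_cancel_left, neg_smul, one_smul, neg_add_cancel])).2

theorem linearIndependent_pair_of_det_ne_zero (φ ψ : E →ₗ[ℝ] ℝ) {x y : E}
    (h : φ x * ψ y ≠ φ y * ψ x) : LinearIndependent ℝ ![x, y] := by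
  refine LinearIndependent.pair_iff.2 fun s t hst => ?_
  have hφ : s * φ x + t * φ y = 0 := by simpa using congrArg φ hst
  have hψ : s * ψ x + t * ψ y = 0 := by simpa using congrArg ψ hst
  have hdet : φ x * ψ y - φ y * ψ x ≠ 0 := sub_ne_zero.2 h
  constructor
  · refine (mul_eq_zero.1 ?_).resolve_right hdet
    linear_combination ψ y * hφ - φ y * hψ
  · refine (mul_eq_zero.1 ?_).resolve_right hdet
    linear_combination φ x * hψ - ψ x * hφ

theorem disjoint_segment_of_lt (φ ψ : E →ₗ[ℝ] ℝ) {c c' p q : E} (hφc : φ c' = φ c)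
    (hψc : ψ c < ψ c') (hcp : φ c ≤ φ p) (hpq : φ p < φ q)
    (hfar : (φ p - φ c) * (ψ c' - ψ q) < (φ q - φ c) * (ψ c' - ψ p)) :
    Disjoint (segment ℝ c p) (segment ℝ c' q) := by
  rw [Set.disjoint_left]
  intro z hzp hzq
  rw [segment_eq_image'] at hzp hzq
  obtain ⟨s, ⟨hs0, hs1⟩, rfl⟩ := hzp
  obtain ⟨t, -, hst⟩ := hzq
  have hφ : φ c' + t * (φ q - φ c') = φ c + s * (φ p - φ c) := by simpa using congrArg φ hst
  have hψ : ψ c' + t * (ψ q - ψ c') = ψ c + s * (ψ p - ψ c) := by simpa using congrArg ψ hst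
  have hb : 0 < φ q - φ c := by linarith
  have hD : 0 < (φ q - φ c) * (ψ c' - ψ c) := mul_pos hb (sub_pos.2 hψc)
  -- with `t` eliminated, `s * X = D` where `X < D` and `0 < D`: impossible for `s ∈ [0, 1]`
  have key : s * ((φ q - φ c) * (ψ p - ψ c) + (φ p - φ c) * (ψ c' - ψ q)) =
      (φ q - φ c) * (ψ c' - ψ c) := by
    rw [hφc] at hφ
    linear_combination (ψ q - ψ c') * hφ - (φ q - φ c) * hψ
  have hX : (φ q - φ c) * (ψ p - ψ c) + (φ p - φ c) * (ψ c' - ψ q) <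
      (φ q - φ c) * (ψ c' - ψ c) := by linarith
  rcases hs0.eq_or_lt with rfl | hs
  · linarith
  · nlinarith [mul_lt_mul_of_pos_left hX hs, mul_nonneg (sub_nonneg.2 hs1) hD.le]

/-- In the coordinates (depth `φ`, height `ψ`), `c` lies below `P` and sees nearer points of `P`
under steeper slopes (the inequality compares slopes, cross-multiplied). -/
def IsFarBelow (φ ψ : E →ₗ[ℝ] ℝ) (P : Set E) (c : E) : Prop :=
  (∀ p ∈ P, ψ c < ψ p) ∧
    ∀ p ∈ P, ∀ q ∈ P, φ p < φ q → (φ p - φ c) * (ψ q - ψ c) < (φ q - φ c) * (ψ p - ψ c)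

namespace IsFarBelow

variable {φ ψ : E →ₗ[ℝ] ℝ} {P : Set E} {c : E}

theorem mono {Q : Set E} (hc : IsFarBelow φ ψ P c) (hQ : Q ⊆ P) : IsFarBelow φ ψ Q c :=
  ⟨fun p hp => hc.1 p (hQ hp), fun p hp q hq => hc.2 p (hQ hp) q (hQ hq)⟩

theorem notMem (hc : IsFarBelow φ ψ P c) : c ∉ P :=
  fun h => (hc.1 c h).false

theorem pairwise_linearIndependent (hc : IsFarBelow φ ψ P c) (hφ : InjOn φ P) :
    P.Pairwise fun p q => LinearIndependent ℝ ![p - c, q - c] := by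
  intro p hp q hq hpq
  refine linearIndependent_pair_of_det_ne_zero φ ψ ?_
  simp only [map_sub]
  rcases lt_or_gt_of_ne (hφ.ne hp hq hpq) with hlt | hlt
  · exact (hc.2 p hp q hq hlt).ne
  · exact (hc.2 q hq p hp hlt).ne'

theorem disjoint_segment {c' : E} (hc : IsFarBelow φ ψ P c) (hc' : IsFarBelow φ (-ψ) P c')
    (hφc : φ c' = φ c) (hP : ∀ x ∈ P, φ c ≤ φ x) (hφ : InjOn φ P) {p q : E} (hp : p ∈ P)
    (hq : q ∈ P) (hpq : p ≠ q) : Disjoint (segment ℝ c p) (segment ℝ c' q) := by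
  have hψc : ψ c < ψ c' := by
    have := hc'.1 p hp
    simp only [LinearMap.neg_apply, neg_lt_neg_iff] at this
    linarith [hc.1 p hp]
  rcases lt_or_gt_of_ne (hφ.ne hp hq hpq) with hlt | hlt
  · refine disjoint_segment_of_lt φ ψ hφc hψc (hP p hp) hlt ?_
    have := hc'.2 p hp q hq hlt
    simp only [LinearMap.neg_apply, hφc] at this
    linarith
  · refine (disjoint_segment_of_lt φ (-ψ) hφc.symm ?_ (hφc ▸ hP q hq) hlt ?_).symm
    · simpa using hψc
    · have := hc.2 q hq p hp hlt
      simp only [LinearMap.neg_apply, hφc]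
      linarith

end IsFarBelow

theorem eventually_isFarBelow (φ ψ : E →ₗ[ℝ] ℝ) (P : Finset E) (m : ℝ) :
    ∀ᶠ h in atBot, ∀ c, φ c = m → ψ c = h → IsFarBelow φ ψ P c := by
  have hlin : ∀ {k : ℝ} (a : ℝ), 0 < k → ∀ᶠ h in atBot, a < k * -h := fun a hk =>
    (tendsto_neg_atBot_atTop.const_mul_atTop hk).eventually_gt_atTop a
  have hbelow : ∀ᶠ h in atBot, ∀ p ∈ P, h < ψ p :=
    (eventually_all_finset P).2 fun p _ => eventually_lt_atBot (ψ p)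
  have hslope : ∀ᶠ h in atBot, ∀ p ∈ P, ∀ q ∈ P, φ p < φ q →
      (φ p - m) * (ψ q - h) < (φ q - m) * (ψ p - h) := by
    refine (eventually_all_finset P).2 fun p _ => (eventually_all_finset P).2 fun q _ => ?_
    by_cases hpq : φ p < φ q
    · filter_upwards [hlin ((φ p - m) * ψ q - (φ q - m) * ψ p) (sub_pos.2 hpq)] with h hh _
      linarith
    · exact Eventually.of_forall fun _ h => absurd h hpq
  filter_upwards [hbelow, hslope] with h hb hs c hφ hψ
  subst hφ hψ
  exact ⟨hb, hs⟩

end Segments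

section Star

variable {S : Finset Pt} {c : Pt}

theorem exists_segment_eq_of_starGraph_adj {u w : {x : Pt // x ∈ insert c S}}
    (h : (starGraph ⟨c, Finset.mem_insert_self c S⟩).Adj u w) :
    ∃ x ∈ S, segment ℝ u.1 w.1 = segment ℝ c x ∧ openSegment ℝ u.1 w.1 = openSegment ℝ c x ∧
      ({u.1, w.1} : Set Pt) = {c, x} := by
  have hmem : ∀ v : {x : Pt // x ∈ insert c S}, v.1 ≠ c → v.1 ∈ S := fun v hv =>
    (Finset.mem_insert.1 v.2).resolve_left hv
  obtain ⟨hne, rfl | rfl⟩ := starGraph_adj.1 h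
  · exact ⟨w.1, hmem w fun h => hne (Subtype.ext h.symm), rfl, rfl, rfl⟩
  · exact ⟨u.1, hmem u fun h => hne (Subtype.ext h), segment_symm ℝ _ _, openSegment_symm ℝ _ _,
      pair_comm _ _⟩

theorem isNCCoverTree_starGraph (hc : c ∉ S)
    (hS : (S : Set Pt).Pairwise fun p q => LinearIndependent ℝ ![p - c, q - c]) :
    IsNCCoverTree S (insert c S) (starGraph ⟨c, Finset.mem_insert_self c S⟩) S.card := by
  have htree := isTree_starGraph (⟨c, Finset.mem_insert_self c S⟩ : {x : Pt // x ∈ insert c S})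
  have hcS : ∀ x ∈ S, c ≠ x := fun x hx h => hc (h ▸ hx)
  refine ⟨htree.connected, htree.isAcyclic, ?_, fun p hp => Or.inl (Finset.mem_insert_of_mem hp),
    ?_, ?_⟩
  · have h := (isTree_iff_connected_and_card.1 htree).2
    rw [Nat.card_coe_set_eq, Nat.card_eq_fintype_card, Fintype.card_coe,
      Finset.card_insert_of_notMem hc] at h
    omega
  · intro u w u' w' h h' hne
    obtain ⟨x, hx, hseg, -, hpair⟩ := exists_segment_eq_of_starGraph_adj h
    obtain ⟨x', hx', hseg', -, hpair'⟩ := exists_segment_eq_of_starGraph_adj h'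
    have hxx' : x ≠ x' := by
      rintro rfl
      rw [← hpair'] at hpair
      rcases pair_eq_pair_iff.1 hpair with ⟨h1, h2⟩ | ⟨h1, h2⟩
      · exact hne (by rw [Subtype.ext h1, Subtype.ext h2])
      · exact hne (by rw [Subtype.ext h1, Subtype.ext h2, Sym2.eq_swap])
    rw [hseg, hseg', hpair, hpair', segment_inter_segment_of_linearIndependent (hS hx hx' hxx'),
      ← insert_inter_distrib, singleton_inter_eq_empty.2 (mem_singleton_iff.not.2 hxx'),
      insert_empty_eq]
  · intro x u w h hxuw
    obtain ⟨y, hy, -, hopen, -⟩ := exists_segment_eq_of_starGraph_adj h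
    rw [hopen] at hxuw
    rcases Finset.mem_insert.1 x.2 with hxc | hxS
    · rw [hxc, left_mem_openSegment_iff] at hxuw
      exact hcS y hy hxuw
    · by_cases hxy : x.1 = y
      · rw [hxy, right_mem_openSegment_iff] at hxuw
        exact hcS y hy hxuw
      · exact notMem_segment_of_linearIndependent (hS hy hxS (Ne.symm hxy))
          (openSegment_subset_segment ℝ _ _ hxuw)

theorem treeSegUnion_starGraph_subset :
    treeSegUnion (insert c S) (starGraph ⟨c, Finset.mem_insert_self c S⟩) ⊆
      ⋃ p ∈ S, segment ℝ c p := by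
  intro z hz
  simp only [treeSegUnion, mem_iUnion] at hz
  obtain ⟨u, w, h, hz⟩ := hz
  obtain ⟨x, hx, hseg, -⟩ := exists_segment_eq_of_starGraph_adj h
  exact mem_biUnion hx (hseg ▸ hz)

theorem IsFarBelow.isNCCoverTree {φ ψ : Pt →ₗ[ℝ] ℝ} (hc : IsFarBelow φ ψ S c) (hφ : InjOn φ S) :
    IsNCCoverTree S (insert c S) (starGraph ⟨c, Finset.mem_insert_self c S⟩) S.card :=
  isNCCoverTree_starGraph hc.notMem (hc.pairwise_linearIndependent hφ)

end Star

-- The depth coordinate: its level lines, of direction `(τ, -1)`, are the candidates for `ℓ`.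
def slant (τ : ℝ) : Pt →ₗ[ℝ] ℝ where
  toFun p := p 0 + τ * p 1
  map_add' p q := by simp only [PiLp.add_apply]; ring
  map_smul' a p := by simp only [PiLp.smul_apply, smul_eq_mul, RingHom.id_apply]; ring

theorem slant_apply (τ : ℝ) (p : Pt) : slant τ p = p 0 + τ * p 1 := rfl

theorem exists_injOn_slant (P : Finset Pt) : ∃ τ : ℝ, InjOn (slant τ) P := by
  obtain ⟨τ, hτ⟩ := Infinite.exists_notMem_finset
    ((P ×ˢ P).image fun pq : Pt × Pt => (pq.2 0 - pq.1 0) / (pq.1 1 - pq.2 1))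
  refine ⟨τ, fun p hp q hq hpq => ?_⟩
  rw [slant_apply, slant_apply] at hpq
  by_cases h1 : p 1 = q 1
  · ext i
    fin_cases i
    · simp only [Fin.zero_eta]
      rw [h1] at hpq
      linarith
    · exact h1
  · refine absurd (Finset.mem_image.2 ⟨(p, q), Finset.mem_product.2 ⟨hp, hq⟩, ?_⟩) hτ
    rw [div_eq_iff (sub_ne_zero.2 h1)]
    linarith

theorem stmt_14_general (n : ℕ) (R B : Finset Pt) (hdisj : Disjoint R B)
    (hcard : R.card + B.card = n) :
    ∃ (VR : Finset Pt) (GR : SimpleGraph {x : Pt // x ∈ VR}) (mR : ℕ)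
      (VB : Finset Pt) (GB : SimpleGraph {x : Pt // x ∈ VB}) (mB : ℕ),
      IsNCCoverTree (R : Set Pt) VR GR mR ∧
      IsNCCoverTree (B : Set Pt) VB GB mB ∧
      Disjoint (treeSegUnion VR GR) (treeSegUnion VB GB) ∧
      mR + mB ≤ n := by
  set ψ : Pt →ₗ[ℝ] ℝ := (EuclideanSpace.proj (1 : Fin 2)).toLinearMap
  obtain ⟨τ, hτ⟩ := exists_injOn_slant (R ∪ B)
  obtain ⟨m, hm⟩ := ((R ∪ B).image (slant τ)).bddBelow
  obtain ⟨h, hred, hblue⟩ := ((eventually_isFarBelow (slant τ) ψ (R ∪ B) m).and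
    (eventually_isFarBelow (slant τ) (-ψ) (R ∪ B) m)).exists
  set cR : Pt := !₂[m - τ * h, h]
  set cB : Pt := !₂[m + τ * h, -h]
  have hcR := hred cR (by simp [cR, slant_apply]) (by simp [cR, ψ])
  have hcB := hblue cB (by simp [cB, slant_apply]) (by simp [cB, ψ])
  have hRP : (R : Set Pt) ⊆ ↑(R ∪ B) := Finset.coe_subset.2 Finset.subset_union_left
  have hBP : (B : Set Pt) ⊆ ↑(R ∪ B) := Finset.coe_subset.2 Finset.subset_union_right
  refine ⟨_, _, _, _, _, _, (hcR.mono hRP).isNCCoverTree (hτ.mono hRP),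
    (hcB.mono hBP).isNCCoverTree (hτ.mono hBP), ?_, hcard.le⟩
  refine (disjoint_iUnion₂_left.2 fun p hp => disjoint_iUnion₂_right.2 fun q hq => ?_).mono
    treeSegUnion_starGraph_subset treeSegUnion_starGraph_subset
  exact hcR.disjoint_segment hcB (by simp [cR, cB, slant_apply])
    (fun x hx => by simpa [cR, slant_apply] using hm (Finset.mem_image_of_mem _ hx)) hτ
    (hRP hp) (hBP hq) (Finset.disjoint_iff_ne.1 hdisj p hp q hq)

/-- Every bicolored set of `n` points admits two mutually noncrossing
monochromatic covering trees with at most `n` edges in total. -/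
theorem stmt_14 (n : ℕ) (R B : Finset Pt) (hdisj : Disjoint R B)
    (hR : R.Nonempty) (hB : B.Nonempty) (hcard : R.card + B.card = n) :
    ∃ (VR : Finset Pt) (GR : SimpleGraph {x : Pt // x ∈ VR}) (mR : ℕ)
      (VB : Finset Pt) (GB : SimpleGraph {x : Pt // x ∈ VB}) (mB : ℕ),
      IsNCCoverTree (R : Set Pt) VR GR mR ∧
      IsNCCoverTree (B : Set Pt) VB GB mB ∧
      Disjoint (treeSegUnion VR GR) (treeSegUnion VB GB) ∧
      mR + mB ≤ n :=
  stmt_14_general n R B hdisj hcard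
end
end

section
/- Let S be a set of 7 points in ℝ² with pairwise distinct x-coordinates, and let x_min and x_max be the minimum and maximum x-coordinates of points of S. Then there exist a point v ∈ ℝ² and at most 5 nondegenerate closed segments, each having v as one of its endpoints, such that any two of the segments intersect exactly in {v}, the union of the segments contains S, and the union of the segments is contained in the closed vertical strip {(x, y) ∈ ℝ² : x_min ≤ x ≤ x_max}. -/
/-!
If some point `v` of the strip sees the other points of `S` in at most five directions, the
farthest point of `S` in each direction is the free end of a segment of the required star.
List the points by increasing abscissa. If three of them are collinear, their leftmost one is such
a `v`. Otherwise, among seven points some increasing quadruple `a, b, c, d` turns the same way at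
`b` and at `c`; then the lines `ab` and `cd` meet at a point `v` strictly between `b` and `c` in
abscissa, from which `a, b` and `c, d` are seen in the same direction.
-/

noncomputable section

open scoped RealInnerProductSpace

namespace PlaneStar

section Star

variable {E : Type*} [NormedAddCommGroup E] [NormedSpace ℝ E]

def dir (v p : E) : E := ‖p - v‖⁻¹ • (p - v)

theorem dir_eq_dir_iff {v a b : E} (ha : a ≠ v) (hb : b ≠ v) :
    dir v a = dir v b ↔ SameRay ℝ (a - v) (b - v) :=
  (sameRay_iff_inv_norm_smul_eq_of_ne (sub_ne_zero.2 ha) (sub_ne_zero.2 hb)).symm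

theorem segment_inter_segment_eq_singleton {v a b : E}
    (h : ¬SameRay ℝ (a - v) (b - v)) : segment ℝ v a ∩ segment ℝ v b = {v} := by
  refine Set.eq_singleton_iff_unique_mem.2
    ⟨⟨left_mem_segment ℝ v a, left_mem_segment ℝ v b⟩, fun x ⟨hxa, hxb⟩ => ?_⟩
  by_contra hxv
  have hxa' := (mem_segment_iff_wbtw.1 hxa).sameRay_vsub_left
  have hxb' := (mem_segment_iff_wbtw.1 hxb).sameRay_vsub_left
  exact h (hxa'.symm.trans hxb' fun hx => absurd (vsub_eq_zero_iff_eq.1 hx) hxv)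

theorem mem_segment_of_sameRay_of_norm_le {v p e : E} (he : e ≠ v)
    (h : SameRay ℝ (e - v) (p - v)) (hle : ‖p - v‖ ≤ ‖e - v‖) : p ∈ segment ℝ v e := by
  obtain ⟨r, hr0, hr⟩ := h.exists_nonneg_left (sub_ne_zero.2 he)
  have hpos : 0 < ‖e - v‖ := norm_pos_iff.2 (sub_ne_zero.2 he)
  rw [← hr, norm_smul, Real.norm_of_nonneg hr0] at hle
  rw [segment_eq_image']
  exact ⟨r, ⟨hr0, by nlinarith⟩, show v + r • (e - v) = p by rw [hr]; abel⟩

theorem card_image_le_card_sub_card {α β : Type*} [DecidableEq α] [DecidableEq β]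
    {s t : Finset α} (f : α → β) (hts : t ⊆ s) (h : ∀ x ∈ t, ∃ y ∈ s \ t, f y = f x) :
    (s.image f).card ≤ s.card - t.card := by
  have hsub : s.image f ⊆ (s \ t).image f := by
    simp only [Finset.image_subset_iff]
    intro x hx
    by_cases hxt : x ∈ t
    · obtain ⟨y, hy, hyx⟩ := h x hxt
      exact Finset.mem_image.2 ⟨y, hy, hyx⟩
    · exact Finset.mem_image_of_mem f (Finset.mem_sdiff.2 ⟨hx, hxt⟩)
  calc (s.image f).card ≤ ((s \ t).image f).card := Finset.card_le_card hsub
    _ ≤ (s \ t).card := Finset.card_image_le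
    _ = s.card - t.card := Finset.card_sdiff_of_subset hts

theorem exists_star_covering [DecidableEq E] (s : Finset E) (v : E) (hs : (s.erase v).Nonempty) :
    ∃ e : Fin ((s.erase v).image (dir v)).card → E, (∀ i, e i ∈ s) ∧ (∀ i, e i ≠ v) ∧
      Pairwise (fun i j => segment ℝ v (e i) ∩ segment ℝ v (e j) = {v}) ∧
      (s : Set E) ⊆ ⋃ i, segment ℝ v (e i) := by
  set D := (s.erase v).image (dir v)
  have farthest : ∀ u ∈ D, ∃ p ∈ s.erase v, dir v p = u ∧
      ∀ q ∈ s.erase v, dir v q = u → ‖q - v‖ ≤ ‖p - v‖ := by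
    intro u hu
    obtain ⟨p, hp, hpu⟩ := Finset.mem_image.1 hu
    obtain ⟨p', hp', hmax⟩ := ((s.erase v).filter (dir v · = u)).exists_max_image
      (‖· - v‖) ⟨p, Finset.mem_filter.2 ⟨hp, hpu⟩⟩
    rw [Finset.mem_filter] at hp'
    exact ⟨p', hp'.1, hp'.2, fun q hq hqu => hmax q (Finset.mem_filter.2 ⟨hq, hqu⟩)⟩
  choose rep hrep_mem hrep_dir hrep_max using farthest
  set e : Fin D.card → E := fun i => rep _ (D.equivFin.symm i).2
  have he_mem : ∀ i, e i ∈ s.erase v := fun i => hrep_mem _ _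
  have he_ne : ∀ i, e i ≠ v := fun i => (Finset.mem_erase.1 (he_mem i)).1
  refine ⟨e, fun i => Finset.mem_of_mem_erase (he_mem i), he_ne, ?_, ?_⟩
  · intro i j hij
    refine segment_inter_segment_eq_singleton fun hsame => hij (D.equivFin.symm.injective ?_)
    exact Subtype.ext ((hrep_dir _ _).symm.trans
      (((dir_eq_dir_iff (he_ne i) (he_ne j)).2 hsame).trans (hrep_dir _ _)))
  · intro p hp
    by_cases hpv : p = v
    · obtain ⟨q, hq⟩ := hs
      rw [hpv]
      exact Set.mem_iUnion.2 ⟨D.equivFin ⟨_, Finset.mem_image_of_mem _ hq⟩, left_mem_segment ℝ v _⟩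
    have hps : p ∈ s.erase v := Finset.mem_erase.2 ⟨hpv, hp⟩
    set i := D.equivFin ⟨dir v p, Finset.mem_image_of_mem _ hps⟩
    have hei : D.equivFin.symm i = ⟨dir v p, _⟩ := D.equivFin.symm_apply_apply _
    have hdir : dir v (e i) = dir v p := by simp only [e, hei, hrep_dir]
    refine Set.mem_iUnion.2 ⟨i, mem_segment_of_sameRay_of_norm_le (he_ne i)
      ((dir_eq_dir_iff (he_ne i) hpv).1 hdir) ?_⟩
    simpa only [e, hei] using hrep_max _ _ p hps rfl

end Star

theorem div_pos_of_mul_pos {α : Type*} [Field α] [LinearOrder α] [IsStrictOrderedRing α]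
    {x y : α} (h : 0 < x * y) : 0 < x / y :=
  div_pos_iff.2 (mul_pos_iff.1 h)

def cross (u w : Pt) : ℝ := u 0 * w 1 - u 1 * w 0

theorem sameRay_of_cross_eq_zero {u w : Pt} (h : cross u w = 0) (hx : 0 < u 0 * w 0) :
    SameRay ℝ u w := by
  have hu : u 0 ≠ 0 := left_ne_zero_of_mul hx.ne'
  have hw : w = (w 0 / u 0) • u := by
    ext i
    fin_cases i
    · simp [hu]
    · simp only [cross] at h
      simp only [Fin.mk_one, PiLp.smul_apply, smul_eq_mul]
      field_simp
      linear_combination h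
  rw [hw]
  exact SameRay.sameRay_pos_smul_right u (div_pos_of_mul_pos (by rwa [mul_comm] at hx))

theorem cross_smul_add_cross_smul (u m w : Pt) : cross m w • u + cross u m • w = cross u w • m := by
  ext i
  fin_cases i <;> simp [cross] <;> ring

theorem cross_mul_cross_pos_of_turns {u m w : Pt} (hu : 0 < u 0) (hm : 0 < m 0) (hw : 0 < w 0)
    (hturn : 0 < cross u m * cross m w) :
    0 < cross u m * cross u w ∧ 0 < cross m w * cross u w := by
  have hid : cross m w * u 0 + cross u m * w 0 = cross u w * m 0 := by
    simpa only [PiLp.add_apply, PiLp.smul_apply, smul_eq_mul] using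
      congrArg (· 0) (cross_smul_add_cross_smul u m w)
  constructor
  · refine pos_of_mul_pos_left (b := m 0) ?_ hm.le
    have : cross u m * cross u w * m 0 =
        cross u m * cross m w * u 0 + cross u m ^ 2 * w 0 := by rw [mul_assoc, ← hid]; ring
    rw [this]
    exact add_pos_of_pos_of_nonneg (mul_pos hturn hu) (by positivity)
  · refine pos_of_mul_pos_left (b := m 0) ?_ hm.le
    have : cross m w * cross u w * m 0 =
        cross m w ^ 2 * u 0 + cross u m * cross m w * w 0 := by rw [mul_assoc, ← hid]; ring
    rw [this]
    exact add_pos_of_nonneg_of_pos (by positivity) (mul_pos hturn hw)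

-- `v` is the intersection point of the lines `ab` and `cd`.
theorem exists_sameRay_pair_of_turns {a b c d : Pt} (hab : a 0 < b 0) (hbc : b 0 < c 0)
    (hcd : c 0 < d 0) (hturn : 0 < cross (b - a) (c - b) * cross (c - b) (d - c)) :
    ∃ v : Pt, b 0 < v 0 ∧ v 0 < c 0 ∧ SameRay ℝ (a - v) (b - v) ∧ SameRay ℝ (c - v) (d - v) := by
  set u := b - a
  set m := c - b
  set w := d - c
  have hu : 0 < u 0 := by simp [u, hab]
  have hw : 0 < w 0 := by simp [w, hcd]
  obtain ⟨hO₁C, hO₂C⟩ := cross_mul_cross_pos_of_turns hu (by simp [m, hbc]) hw hturn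
  set O₁ := cross u m
  set O₂ := cross m w
  set C := cross u w
  have hC : C ≠ 0 := right_ne_zero_of_mul hO₁C.ne'
  set v := b + (O₂ / C) • u
  have hbv : b - v = (-(O₂ / C)) • u := by simp only [v]; module
  have hav : a - v = (-(1 + O₂ / C)) • u := by simp only [v, u]; module
  have hcv : c - v = (O₁ / C) • w := by
    have : m = (O₂ / C) • u + (O₁ / C) • w := by
      rw [div_eq_inv_mul, div_eq_inv_mul, mul_smul, mul_smul, ← smul_add,
        cross_smul_add_cross_smul, smul_smul, inv_mul_cancel₀ hC, one_smul]
    calc c - v = m - (O₂ / C) • u := by simp only [v, m]; abel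
      _ = (O₁ / C) • w := by rw [this]; abel
  have hdv : d - v = (1 + O₁ / C) • w := by
    rw [add_smul, one_smul, ← hcv]; simp only [w]; abel
  have hs₁ := div_pos_of_mul_pos hO₁C
  have hs₂ := div_pos_of_mul_pos hO₂C
  refine ⟨v, ?_, ?_, ?_, ?_⟩
  · have := congrArg (· 0) hbv
    simp only [PiLp.sub_apply, PiLp.smul_apply, smul_eq_mul] at this
    nlinarith [mul_pos hs₂ hu]
  · have := congrArg (· 0) hcv
    simp only [PiLp.sub_apply, PiLp.smul_apply, smul_eq_mul] at this
    nlinarith [mul_pos hs₁ hw]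
  · rw [hav, hbv]
    exact sameRay_smul_smul_of_mul_nonneg (by nlinarith)
  · rw [hcv, hdv]
    exact sameRay_smul_smul_of_mul_nonneg (by positivity)

theorem card_image_dir_erase_le_of_cross_eq_zero [DecidableEq Pt] {S : Finset Pt} {a b c : Pt}
    (ha : a ∈ S) (hb : b ∈ S) (hc : c ∈ S) (hab : a 0 < b 0) (hbc : b 0 < c 0)
    (h0 : cross (b - a) (c - b) = 0) : ((S.erase a).image (dir a)).card ≤ S.card - 2 := by
  have hne {p q : Pt} (h : p 0 < q 0) : p ≠ q := ne_of_apply_ne (· 0) h.ne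
  have hsame : SameRay ℝ (b - a) (c - a) := by
    have hx : 0 < (b - a) 0 * (c - b) 0 := mul_pos (by simpa using hab) (by simpa using hbc)
    simpa using SameRay.rfl.add_right (sameRay_of_cross_eq_zero h0 hx)
  have hca := (hne (hab.trans hbc)).symm
  have hdir : dir a b = dir a c := (dir_eq_dir_iff (hne hab).symm hca).2 hsame
  calc ((S.erase a).image (dir a)).card ≤ (S.erase a).card - ({c} : Finset Pt).card :=
        card_image_le_card_sub_card _ (by simp [hca, hc])
          (by simpa using ⟨b, ⟨⟨(hne hab).symm, hb⟩, hne hbc⟩, hdir⟩)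
    _ = S.card - 2 := by rw [Finset.card_erase_of_mem ha, Finset.card_singleton]; omega

theorem card_image_dir_erase_le_of_sameRay_pairs [DecidableEq Pt] {S : Finset Pt}
    {v a b c d : Pt} (ha : a ∈ S) (hb : b ∈ S) (hc : c ∈ S) (hd : d ∈ S) (hab : a 0 < b 0)
    (hbv : b 0 < v 0) (hvc : v 0 < c 0) (hcd : c 0 < d 0) (h₁ : SameRay ℝ (a - v) (b - v))
    (h₂ : SameRay ℝ (c - v) (d - v)) : ((S.erase v).image (dir v)).card ≤ S.card - 2 := by
  have hne {p q : Pt} (h : p 0 < q 0) : p ≠ q := ne_of_apply_ne (· 0) h.ne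
  have hav := hne (hab.trans hbv)
  have hcv := (hne hvc).symm
  have hdv := (hne (hvc.trans hcd)).symm
  have hdir₁ := (dir_eq_dir_iff hav (hne hbv)).2 h₁
  have hdir₂ := (dir_eq_dir_iff hcv hdv).2 h₂
  have hbd := hne (hbv.trans (hvc.trans hcd))
  calc ((S.erase v).image (dir v)).card ≤ (S.erase v).card - ({b, d} : Finset Pt).card :=
        card_image_le_card_sub_card _ (by simp [Finset.insert_subset_iff, hne hbv, hdv, hb, hd])
          (by simpa using ⟨⟨a, ⟨⟨hav, ha⟩, hne hab, hne (hab.trans (hbv.trans (hvc.trans hcd)))⟩,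
            hdir₁⟩, ⟨c, ⟨⟨hcv, hc⟩, (hne (hbv.trans hvc)).symm, hne hcd⟩, hdir₂⟩⟩)
    _ ≤ S.card - 2 := by
        rw [Finset.card_pair hbd]
        exact Nat.sub_le_sub_right Finset.card_erase_le 2

theorem exists_turns_same_sign (χ : Fin 7 → Fin 7 → Fin 7 → ℝ)
    (hχ : ∀ i j k, i < j → j < k → χ i j k ≠ 0) :
    ∃ i j k l, i < j ∧ j < k ∧ k < l ∧ 0 < χ i j k * χ j k l := by
  by_contra! h
  have alt : ∀ i j k l, i < j → j < k → k < l → (0 < χ i j k ↔ ¬0 < χ j k l) := by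
    intro i j k l hij hjk hkl
    have hle := h i j k l hij hjk hkl
    refine ⟨fun h₁ h₂ => (mul_pos h₁ h₂).not_ge hle, fun h₂ => ?_⟩
    by_contra h₁
    exact (mul_pos_of_neg_of_neg (lt_of_le_of_ne (not_lt.1 h₁) (hχ i j k hij hjk))
      (lt_of_le_of_ne (not_lt.1 h₂) (hχ j k l hjk hkl))).not_ge hle
  -- Alternation along 0123, 1234, 2345 and along 0124, 1245, 2456 gives the signs of χ 3 4 5
  -- and χ 4 5 6 both opposite to that of χ 0 1 2, against the alternation along 3456.
  have := alt 0 1 2 3 (by decide) (by decide) (by decide)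
  have := alt 1 2 3 4 (by decide) (by decide) (by decide)
  have := alt 2 3 4 5 (by decide) (by decide) (by decide)
  have := alt 0 1 2 4 (by decide) (by decide) (by decide)
  have := alt 1 2 4 5 (by decide) (by decide) (by decide)
  have := alt 2 4 5 6 (by decide) (by decide) (by decide)
  have := alt 3 4 5 6 (by decide) (by decide) (by decide)
  tauto

theorem exists_strictMono_enum {α β : Type*} [LinearOrder β] {s : Finset α} {n : ℕ}
    (hs : s.card = n) (f : α → β) (hf : Set.InjOn f s) :
    ∃ q : Fin n → α, (∀ i, q i ∈ s) ∧ StrictMono (f ∘ q) := by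
  classical
  have hX : (s.image f).card = n := by rw [Finset.card_image_of_injOn hf, hs]
  set o := (s.image f).orderEmbOfFin hX
  have hpre : ∀ i, ∃ p ∈ s, f p = o i := fun i =>
    Finset.mem_image.1 ((s.image f).orderEmbOfFin_mem hX i)
  choose q hqs hqo using hpre
  exact ⟨q, hqs, fun i j hij => by simpa only [Function.comp_apply, hqo] using o.strictMono hij⟩

theorem exists_center_card_dir_le_five [DecidableEq Pt] (S : Finset Pt) (hcard : S.card = 7)
    (q : Fin 7 → Pt) (hqS : ∀ i, q i ∈ S) (hq : StrictMono fun i => q i 0) :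
    ∃ v : Pt, q 0 0 ≤ v 0 ∧ v 0 ≤ q 6 0 ∧ ((S.erase v).image (dir v)).card ≤ 5 := by
  by_cases hcol : ∃ i j k, i < j ∧ j < k ∧ cross (q j - q i) (q k - q j) = 0
  · obtain ⟨i, j, k, hij, hjk, h0⟩ := hcol
    refine ⟨q i, hq.monotone (Fin.zero_le i), hq.monotone (Fin.le_last i), ?_⟩
    simpa [hcard] using card_image_dir_erase_le_of_cross_eq_zero (hqS i) (hqS j) (hqS k)
      (hq hij) (hq hjk) h0
  · push Not at hcol
    obtain ⟨i, j, k, l, hij, hjk, hkl, hturn⟩ := exists_turns_same_sign _ hcol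
    obtain ⟨v, hjv, hvk, hsame₁, hsame₂⟩ :=
      exists_sameRay_pair_of_turns (hq hij) (hq hjk) (hq hkl) hturn
    refine ⟨v, (hq.monotone (Fin.zero_le j)).trans hjv.le,
      hvk.le.trans (hq.monotone (Fin.le_last k)), ?_⟩
    simpa [hcard] using card_image_dir_erase_le_of_sameRay_pairs (hqS i) (hqS j) (hqS k)
      (hqS l) (hq hij) hjv hvk (hq hkl) hsame₁ hsame₂

end PlaneStar

open PlaneStar in
/-- Any 7 points with pairwise distinct x-coordinates can be covered by a
star of at most 5 segments contained in the closed vertical strip spanned by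
their minimum and maximum x-coordinates. -/
theorem stmt_16 (S : Finset Pt) (hcard : S.card = 7)
    (hx : ∀ p ∈ S, ∀ q ∈ S, p ≠ q → p 0 ≠ q 0)
    (xmin xmax : ℝ)
    (hmin : IsLeast ((fun p : Pt => p 0) '' (S : Set Pt)) xmin)
    (hmax : IsGreatest ((fun p : Pt => p 0) '' (S : Set Pt)) xmax) :
    ∃ (v : Pt) (m : ℕ) (e : Fin m → Pt), m ≤ 5 ∧
      (∀ i, e i ≠ v) ∧
      (∀ i j, i ≠ j → segment ℝ v (e i) ∩ segment ℝ v (e j) = {v}) ∧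
      (S : Set Pt) ⊆ (⋃ i, segment ℝ v (e i)) ∧
      (⋃ i, segment ℝ v (e i)) ⊆ {q : Pt | xmin ≤ q 0 ∧ q 0 ≤ xmax} := by
  classical
  set strip := {q : Pt | xmin ≤ q 0 ∧ q 0 ≤ xmax}
  have hS : ∀ p ∈ S, p ∈ strip := fun p hp => ⟨hmin.2 ⟨p, hp, rfl⟩, hmax.2 ⟨p, hp, rfl⟩⟩
  have hstrip : Convex ℝ strip :=
    (convex_Icc xmin xmax).linear_preimage
      (EuclideanSpace.proj (0 : Fin 2) : Pt →L[ℝ] ℝ).toLinearMap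
  obtain ⟨q, hqS, hq⟩ := exists_strictMono_enum hcard (· 0)
    fun p hp r hr h => by_contra fun hne => hx p hp r hr hne h
  obtain ⟨v, hv₀, hv₆, hfew⟩ := exists_center_card_dir_le_five S hcard q hqS hq
  have hv : v ∈ strip := ⟨(hS _ (hqS 0)).1.trans hv₀, hv₆.trans (hS _ (hqS 6)).2⟩
  have hne : (S.erase v).Nonempty :=
    Finset.card_pos.1 (by have := Finset.pred_card_le_card_erase (s := S) (a := v); omega)
  obtain ⟨e, heS, hev, hdisj, hcover⟩ := exists_star_covering S v hne
  exact ⟨v, _, e, hfew, hev, fun i j hij => hdisj hij, hcover,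
    Set.iUnion_subset fun i => hstrip.segment_subset hv (hS _ (heS i))⟩
end
end

section
/- Every set of n ≥ 2 points in ℝ² admits a noncrossing covering path with at most n − 1 segments. -/
noncomputable section

open scoped RealInnerProductSpace

/-!
Choose a linear functional `f` on the plane that is injective on `S` (possible since only
finitely many kernels `f (p - q) = 0` must be avoided) and list the points of `S` in increasing
order of `f`. Along the polygonal path through them `f` is strictly increasing, so each segment
lies in its own slab `f (v i) ≤ f ≤ f (v (i + 1))`. Slabs of non-consecutive segments are disjoint,
consecutive ones share only the level of their common vertex, and a segment on which `f` is not
constant meets that level only at the vertex.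
-/

open Set

theorem Module.exists_dual_injOn {K E : Type*} [Field K] [Infinite K] [AddCommGroup E]
    [Module K E] {S : Set E} (hS : S.Finite) : ∃ f : Module.Dual K E, InjOn f S := by
  have : Finite S := hS.to_subtype
  obtain ⟨f, hf⟩ := Module.exists_dual_forall_apply_ne_zero (K := K)
    (fun x : {x : S × S // x.1 ≠ x.2} ↦ (x.1.1 : E) - x.1.2)
    fun x ↦ sub_ne_zero.mpr (Subtype.coe_ne_coe.mpr x.2)
  refine ⟨f, fun p hp q hq hpq ↦ ?_⟩
  by_contra hne
  exact hf ⟨(⟨p, hp⟩, ⟨q, hq⟩), by simpa using hne⟩ (by simp [hpq])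

theorem Finset.exists_strictMono_comp_of_injOn {α β : Type*} [LinearOrder β] {S : Finset α}
    {f : α → β} (hf : InjOn f S) {k : ℕ} (hk : S.card = k) :
    ∃ v : Fin k → α, StrictMono (f ∘ v) ∧ Set.range v = S := by
  have hT : (S.image f).card = k := by rw [card_image_of_injOn hf, hk]
  set e := (S.image f).orderEmbOfFin hT
  have hpre : ∀ i, ∃ p ∈ S, f p = e i := fun i ↦
    Finset.mem_image.mp ((S.image f).orderEmbOfFin_mem hT i)
  choose v hvS hfv using hpre
  refine ⟨v, fun i j hij ↦ by simpa [hfv] using e.strictMono hij, ?_⟩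
  refine Set.Subset.antisymm (Set.range_subset_iff.mpr hvS) fun p hp ↦ ?_
  obtain ⟨i, hi⟩ : f p ∈ Set.range e := by
    rw [Finset.range_orderEmbOfFin]
    exact Finset.mem_coe.mpr (Finset.mem_image_of_mem f hp)
  exact ⟨i, hf (hvS i) hp (by rw [hfv, hi])⟩

section Segment

variable {𝕜 E : Type*} [Field 𝕜] [LinearOrder 𝕜] [IsStrictOrderedRing 𝕜] [AddCommGroup E]
  [Module 𝕜 E] (f : E →ₗ[𝕜] 𝕜) {a b x : E}

theorem LinearMap.apply_mem_Icc_of_mem_segment (hab : f a ≤ f b) (hx : x ∈ segment 𝕜 a b) :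
    f x ∈ Icc (f a) (f b) := by
  rw [← segment_eq_Icc hab, ← f.coe_toAffineMap, ← image_segment]
  exact mem_image_of_mem _ hx

theorem LinearMap.eq_right_of_mem_segment_of_apply_eq (hab : f a ≠ f b)
    (hx : x ∈ segment 𝕜 a b) (hfx : f x = f b) : x = b := by
  obtain ⟨u, w, -, -, huw, rfl⟩ := hx
  have hu : u * (f a - f b) = 0 := by
    simp only [map_add, map_smul, smul_eq_mul] at hfx
    linear_combination hfx - f b * huw
  obtain rfl : u = 0 := (mul_eq_zero.mp hu).resolve_right (sub_ne_zero.mpr hab)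
  obtain rfl : w = 1 := by simpa using huw
  simp

end Segment

theorem isNoncrossing_of_strictMono {m : ℕ} {v : Fin (m + 1) → Pt} (f : Pt →ₗ[ℝ] ℝ)
    (hv : StrictMono (f ∘ v)) : IsNoncrossing m v := by
  have hbounds : ∀ (i : Fin m), ∀ x ∈ pathSeg v i, f (v i.castSucc) ≤ f x ∧ f x ≤ f (v i.succ) :=
    fun i x hx ↦ f.apply_mem_Icc_of_mem_segment (hv Fin.castSucc_lt_succ).le hx
  intro i j hij
  constructor
  · intro hji
    have hcs : j.castSucc = i.succ := Fin.ext (by simp [hji])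
    ext x
    constructor
    · rintro ⟨hxi, hxj⟩
      have hfx := le_antisymm (hbounds i x hxi).2 (hcs ▸ (hbounds j x hxj).1)
      exact f.eq_right_of_mem_segment_of_apply_eq (hv Fin.castSucc_lt_succ).ne hxi hfx
    · rintro rfl
      exact ⟨right_mem_segment ℝ _ _, hcs ▸ left_mem_segment ℝ _ _⟩
  · intro hlt
    refine eq_empty_iff_forall_notMem.mpr fun x ⟨hxi, hxj⟩ ↦ ?_
    have hgap : f (v i.succ) < f (v j.castSucc) := hv (Fin.lt_def.mpr (by simpa using hlt))
    linarith [(hbounds i x hxi).2, (hbounds j x hxj).1]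

theorem exists_mem_pathSeg {m : ℕ} (hm : 0 < m) (v : Fin (m + 1) → Pt) (i : Fin (m + 1)) :
    ∃ j : Fin m, v i ∈ pathSeg v j := by
  rcases Fin.eq_castSucc_or_eq_last i with ⟨j, rfl⟩ | rfl
  · exact ⟨j, left_mem_segment ℝ _ _⟩
  · obtain ⟨k, rfl⟩ : ∃ k, m = k + 1 := ⟨m - 1, by omega⟩
    exact ⟨Fin.last k, right_mem_segment ℝ _ _⟩

/-- Every set of `n ≥ 2` points admits a noncrossing covering path with at
most `n - 1` segments. -/
theorem stmt_17 (n : ℕ) (hn : 2 ≤ n) (S : Finset Pt) (hcard : S.card = n) :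
    ∃ m : ℕ, m ≤ n - 1 ∧ ∃ v : Fin (m + 1) → Pt,
      IsCoveringPath (S : Set Pt) m v ∧ IsNoncrossing m v := by
  obtain ⟨m, rfl⟩ : ∃ m, n = m + 1 := ⟨n - 1, by omega⟩
  obtain ⟨f, hf⟩ := Module.exists_dual_injOn (K := ℝ) S.finite_toSet
  obtain ⟨v, hv, hrange⟩ := S.exists_strictMono_comp_of_injOn hf hcard
  refine ⟨m, by omega, v, fun p hp ↦ ?_, isNoncrossing_of_strictMono f hv⟩
  obtain ⟨i, rfl⟩ : p ∈ range v := hrange ▸ hp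
  exact exists_mem_pathSeg (by omega) v i
end
end
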